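/- arXiv:2410.20955 — 4 statements merged into one kernel-verified Lean document; each statement's English description precedes it below -/
import Mathlib

section
/- Let 0 < r < 1 < R, set α_n = 2π(r^{2n+1} + R^{2n+1}) for n ∈ ℤ, and let s_j = ∑_{n∈ℤ} n^j/α_n for j = 0, 1, 2 (these series converge absolutely). Then: (i) for every a : ℤ → ℂ such that the family (|a_n|² α_n)_{n∈ℤ} is summable with ∑_{n∈ℤ} |a_n|² α_n ≤ 1 and such that (a_n) is summable with ∑_{n∈ℤ} a_n = 0, the family (n a_n)_{n∈ℤ} is summable and |∑_{n∈ℤ} n a_n|² ≤ (s_0 s_2 − s_1²)/s_0; (ii) there exists such an a for which equality holds. Hence the supremum of |∑_{n∈ℤ} n a_n|² over all such a equals (s_0 s_2 − s_1²)/s_0. -/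
/-- The squared `H²(bA(r,R))`-norm of the monomial `zⁿ` on the annulus
`A(r,R) = {r < |z| < R}`: `αₙ = 2π(r^{2n+1} + R^{2n+1})` (integer powers). -/
noncomputable def alph (r R : ℝ) (n : ℤ) : ℝ :=
  2 * Real.pi * (r ^ (2 * n + 1) + R ^ (2 * n + 1))

/-- `s_j = ∑_{n∈ℤ} n^j/αₙ`. -/
noncomputable def sj (r R : ℝ) (j : ℕ) : ℝ := ∑' n : ℤ, (n : ℝ) ^ j / alph r R n

lemma alph_pos {r R : ℝ} (hr : 0 < r) (hR : 0 < R) (n : ℤ) : 0 < alph r R n := by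
  unfold alph; positivity

private lemma cs_tsum {f g : ℤ → ℝ} (hf0 : ∀ n, 0 ≤ f n) (hg0 : ∀ n, 0 ≤ g n)
    (hf : Summable (fun n => f n ^ 2)) (hg : Summable (fun n => g n ^ 2)) :
    Summable (fun n => f n * g n) ∧
      (∑' n, f n * g n) ^ 2 ≤ (∑' n, f n ^ 2) * (∑' n, g n ^ 2) := by
  have hfg : Summable (fun n => f n * g n) := by
    apply Summable.of_nonneg_of_le (fun n => mul_nonneg (hf0 n) (hg0 n))
      (fun n => ?_) ((hf.add hg).div_const 2)
    nlinarith [sq_nonneg (f n - g n)]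
  refine ⟨hfg, ?_⟩
  set A := ∑' n, f n ^ 2 with hA
  set B := ∑' n, g n ^ 2 with hB
  have hA0 : 0 ≤ A := tsum_nonneg fun n => sq_nonneg _
  have hB0 : 0 ≤ B := tsum_nonneg fun n => sq_nonneg _
  have h1 : (∑' n, f n * g n) ≤ Real.sqrt (A * B) := by
    apply Summable.tsum_le_of_sum_le hfg
    intro s
    rw [Real.le_sqrt (Finset.sum_nonneg fun i _ => mul_nonneg (hf0 i) (hg0 i))
      (mul_nonneg hA0 hB0)]
    calc (∑ i ∈ s, f i * g i) ^ 2 ≤ (∑ i ∈ s, f i ^ 2) * (∑ i ∈ s, g i ^ 2) :=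
          Finset.sum_mul_sq_le_sq_mul_sq s f g
      _ ≤ A * B :=
          mul_le_mul (Summable.sum_le_tsum s (fun i _ => sq_nonneg _) hf)
            (Summable.sum_le_tsum s (fun i _ => sq_nonneg _) hg)
            (Finset.sum_nonneg fun i _ => sq_nonneg _) hA0
  calc (∑' n, f n * g n) ^ 2 ≤ Real.sqrt (A * B) ^ 2 :=
        pow_le_pow_left₀ (tsum_nonneg fun n => mul_nonneg (hf0 n) (hg0 n)) h1 2
    _ = A * B := Real.sq_sqrt (mul_nonneg hA0 hB0)

private lemma summable_absj {r R : ℝ} (hr : 0 < r) (hr1 : r < 1) (hR : 1 < R) (j : ℕ) :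
    Summable (fun n : ℤ => |(n : ℝ)| ^ j / alph r R n) := by
  have hR0 : (0:ℝ) < R := lt_trans one_pos hR
  apply Summable.of_nat_of_neg
  · have hsum : Summable (fun k : ℕ => (k:ℝ) ^ j * ((R^2)⁻¹) ^ k * (2*Real.pi*R)⁻¹) := by
      apply Summable.mul_right
      apply summable_pow_mul_geometric_of_norm_lt_one
      rw [Real.norm_eq_abs, abs_of_pos (by positivity), inv_lt_one_iff₀]
      right; nlinarith
    apply hsum.of_nonneg_of_le
      (fun k => div_nonneg (by positivity) (alph_pos hr hR0 _).le)
    intro k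
    have hkey : R ^ (2 * (k:ℤ) + 1) = (R^2)^k * R := by
      have h1 : 2 * (k:ℤ) + 1 = ((2*k+1 : ℕ) : ℤ) := by push_cast; ring
      rw [h1, zpow_natCast, pow_succ, pow_mul]
    have hge : 2*Real.pi*R*((R^2)^k) ≤ alph r R (k:ℤ) := by
      unfold alph
      rw [hkey]
      have : (0:ℝ) ≤ r ^ (2 * (k:ℤ) + 1) := le_of_lt (zpow_pos hr _)
      nlinarith [Real.pi_pos]
    have hpos : (0:ℝ) < 2*Real.pi*R*((R^2)^k) := by positivity
    have habs : |((k:ℤ):ℝ)| ^ j = (k:ℝ)^j := by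
      push_cast [Nat.abs_cast]; ring
    rw [habs]
    refine le_trans (div_le_div_of_nonneg_left (pow_nonneg (Nat.cast_nonneg k) j) hpos hge)
      (le_of_eq ?_)
    rw [div_eq_mul_inv, mul_inv]
    ring
  · have hsum : Summable (fun k : ℕ => (k:ℝ) ^ j * (r^2) ^ k * (2*Real.pi*r)⁻¹) := by
      apply Summable.mul_right
      apply summable_pow_mul_geometric_of_norm_lt_one
      rw [Real.norm_eq_abs, abs_of_pos (by positivity)]
      nlinarith
    apply hsum.of_nonneg_of_le
      (fun k => div_nonneg (by positivity) (alph_pos hr hR0 _).le)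
    intro k
    have hkey : r ^ (2 * (-(k:ℤ)) + 1) = ((r^2)⁻¹)^k * r := by
      have h1 : 2 * (-(k:ℤ)) + 1 = 1 + (-2) * (k:ℤ) := by ring
      rw [h1, zpow_add₀ (ne_of_gt hr), zpow_one, mul_comm]
      congr 1
      rw [show ((-2:ℤ)*k) = (-(2*k:ℕ) : ℤ) by push_cast; ring, zpow_neg, zpow_natCast,
        pow_mul, inv_pow]
    have hge : 2*Real.pi*r*(((r^2)⁻¹)^k) ≤ alph r R (-(k:ℤ)) := by
      unfold alph
      rw [hkey]
      have : (0:ℝ) ≤ R ^ (2 * (-(k:ℤ)) + 1) := le_of_lt (zpow_pos hR0 _)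
      nlinarith [Real.pi_pos]
    have hpos : (0:ℝ) < 2*Real.pi*r*(((r^2)⁻¹)^k) := by positivity
    simp only [Int.cast_neg, Int.cast_natCast, abs_neg, Nat.abs_cast]
    refine le_trans (div_le_div_of_nonneg_left (pow_nonneg (Nat.cast_nonneg k) j) hpos hge)
      (le_of_eq ?_)
    rw [div_eq_mul_inv, mul_inv, inv_pow, inv_inv]
    ring

/-- The series `s_j` (j = 0,1,2) converge; (i) every `a : ℤ → ℂ` with `∑ |aₙ|² αₙ ≤ 1`,
`∑ aₙ = 0` has `(n aₙ)` summable with `|∑ n aₙ|² ≤ (s₀s₂ − s₁²)/s₀`; (ii) equality is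
attained; hence the supremum of `|∑ n aₙ|²` over all such `a` equals `(s₀s₂ − s₁²)/s₀`
(this is the maximal domain function `J⁽¹⁾_{A(r,R)}(1)`). -/
theorem stmt2 (r R : ℝ) (hr : 0 < r) (hr1 : r < 1) (hR : 1 < R) :
    (∀ j : ℕ, j ≤ 2 → Summable (fun n : ℤ => (n : ℝ) ^ j / alph r R n)) ∧
    (∀ a : ℤ → ℂ,
      Summable (fun n : ℤ => ‖a n‖ ^ 2 * alph r R n) →
      (∑' n : ℤ, ‖a n‖ ^ 2 * alph r R n) ≤ 1 →
      Summable a → (∑' n : ℤ, a n) = 0 →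
      Summable (fun n : ℤ => (n : ℂ) * a n) ∧
        ‖∑' n : ℤ, (n : ℂ) * a n‖ ^ 2 ≤
          (sj r R 0 * sj r R 2 - sj r R 1 ^ 2) / sj r R 0) ∧
    (∃ a : ℤ → ℂ,
      Summable (fun n : ℤ => ‖a n‖ ^ 2 * alph r R n) ∧
      (∑' n : ℤ, ‖a n‖ ^ 2 * alph r R n) ≤ 1 ∧
      Summable a ∧ (∑' n : ℤ, a n) = 0 ∧
      ‖∑' n : ℤ, (n : ℂ) * a n‖ ^ 2 =
        (sj r R 0 * sj r R 2 - sj r R 1 ^ 2) / sj r R 0) ∧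
    sSup {x : ℝ | ∃ a : ℤ → ℂ,
      Summable (fun n : ℤ => ‖a n‖ ^ 2 * alph r R n) ∧
      (∑' n : ℤ, ‖a n‖ ^ 2 * alph r R n) ≤ 1 ∧
      Summable a ∧ (∑' n : ℤ, a n) = 0 ∧
      x = ‖∑' n : ℤ, (n : ℂ) * a n‖ ^ 2} =
      (sj r R 0 * sj r R 2 - sj r R 1 ^ 2) / sj r R 0 := by
  have hR0 : (0:ℝ) < R := lt_trans one_pos hR
  have hα : ∀ n : ℤ, 0 < alph r R n := alph_pos hr hR0
  have hsj : ∀ j : ℕ, Summable (fun n : ℤ => (n : ℝ) ^ j / alph r R n) := by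
    intro j
    rw [← summable_abs_iff]
    refine (summable_absj hr hr1 hR j).congr fun n => ?_
    rw [abs_div, abs_pow, abs_of_pos (hα n)]
  have hσ0 : Summable (fun n : ℤ => 1 / alph r R n) := by simpa using hsj 0
  have hσ1 : Summable (fun n : ℤ => (n:ℝ) / alph r R n) := by simpa using hsj 1
  have hσ2 : Summable (fun n : ℤ => (n:ℝ)^2 / alph r R n) := hsj 2
  have hs0eq : sj r R 0 = ∑' n : ℤ, 1 / alph r R n := tsum_congr fun n => by rw [pow_zero]
  have hs1eq : sj r R 1 = ∑' n : ℤ, (n:ℝ) / alph r R n := tsum_congr fun n => by rw [pow_one]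
  have hs2eq : sj r R 2 = ∑' n : ℤ, (n:ℝ)^2 / alph r R n := rfl
  have hs0pos : 0 < sj r R 0 := by
    rw [hs0eq]
    exact Summable.tsum_pos hσ0 (fun n => div_nonneg one_pos.le (hα n).le) 0 (div_pos one_pos (hα 0))
  have comb : ∀ u v w : ℝ,
      Summable (fun n : ℤ => (u * (n:ℝ)^2 + v * (n:ℝ) + w) / alph r R n) ∧
      (∑' n : ℤ, (u * (n:ℝ)^2 + v * (n:ℝ) + w) / alph r R n)
        = u * sj r R 2 + v * sj r R 1 + w * sj r R 0 := by
    intro u v w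
    have h1 : Summable (fun n : ℤ => u * ((n:ℝ)^2 / alph r R n)) := hσ2.mul_left u
    have h2 : Summable (fun n : ℤ => v * ((n:ℝ) / alph r R n)) := hσ1.mul_left v
    have h3 : Summable (fun n : ℤ => w * (1 / alph r R n)) := hσ0.mul_left w
    have heq : ∀ n : ℤ, (u * (n:ℝ)^2 + v * (n:ℝ) + w) / alph r R n
        = u * ((n:ℝ)^2 / alph r R n) + (v * ((n:ℝ) / alph r R n) + w * (1 / alph r R n)) := by
      intro n
      have := (hα n).ne'
      field_simp
      ring
    constructor
    · exact ((h1.add (h2.add h3)).congr fun n => (heq n).symm)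
    · calc (∑' n : ℤ, (u * (n:ℝ)^2 + v * (n:ℝ) + w) / alph r R n)
          = ∑' n : ℤ, (u * ((n:ℝ)^2 / alph r R n)
              + (v * ((n:ℝ)/alph r R n) + w * (1/alph r R n))) := tsum_congr heq
        _ = u * sj r R 2 + v * sj r R 1 + w * sj r R 0 := by
            rw [Summable.tsum_add h1 (h2.add h3), Summable.tsum_add h2 h3, tsum_mul_left, tsum_mul_left,
              tsum_mul_left, ← hs1eq, ← hs0eq, ← hs2eq, add_assoc]
  set t : ℝ := sj r R 1 / sj r R 0 with ht
  set Q : ℝ := (sj r R 0 * sj r R 2 - sj r R 1 ^ 2) / sj r R 0 with hQ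
  have hQ1 : 1 * sj r R 2 + (-2*t) * sj r R 1 + t^2 * sj r R 0 = Q := by
    rw [ht, hQ]; field_simp; ring
  have hQ2 : 1 * sj r R 2 + (-t) * sj r R 1 + 0 * sj r R 0 = Q := by
    rw [ht, hQ]; field_simp; ring
  have hQ3 : 0 * sj r R 2 + 1 * sj r R 1 + (-t) * sj r R 0 = 0 := by
    rw [ht]; field_simp; ring
  have hFsum : Summable (fun n : ℤ => ((n:ℝ) - t)^2 / alph r R n) :=
    ((comb 1 (-2*t) (t^2)).1).congr fun n => by rw [show (1 * (n:ℝ)^2 + (-2*t) * (n:ℝ) + t^2)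
      = ((n:ℝ) - t)^2 from by ring]
  have hFts : (∑' n : ℤ, ((n:ℝ) - t)^2 / alph r R n) = Q := by
    rw [← hQ1, ← (comb 1 (-2*t) (t^2)).2]
    exact tsum_congr fun n => by rw [show (1 * (n:ℝ)^2 + (-2*t) * (n:ℝ) + t^2)
      = ((n:ℝ) - t)^2 from by ring]
  have hQ0 : 0 ≤ Q := by
    rw [← hFts]
    exact tsum_nonneg fun n => div_nonneg (sq_nonneg _) (hα n).le
  have part1 : ∀ a : ℤ → ℂ,
      Summable (fun n : ℤ => ‖a n‖ ^ 2 * alph r R n) →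
      (∑' n : ℤ, ‖a n‖ ^ 2 * alph r R n) ≤ 1 →
      Summable a → (∑' n : ℤ, a n) = 0 →
      Summable (fun n : ℤ => (n : ℂ) * a n) ∧
        ‖∑' n : ℤ, (n : ℂ) * a n‖ ^ 2 ≤ Q := by
    intro a hsum2 hle1 hsa hts
    set F : ℤ → ℝ := fun n => |((n:ℝ) - t)| / Real.sqrt (alph r R n) with hF
    set G : ℤ → ℝ := fun n => ‖a n‖ * Real.sqrt (alph r R n) with hG
    have hF0 : ∀ n, 0 ≤ F n := fun n => div_nonneg (abs_nonneg _) (Real.sqrt_nonneg _)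
    have hG0 : ∀ n, 0 ≤ G n := fun n => mul_nonneg (norm_nonneg _) (Real.sqrt_nonneg _)
    have hF2 : ∀ n, F n ^ 2 = ((n:ℝ) - t)^2 / alph r R n := by
      intro n
      rw [hF, div_pow, sq_abs, Real.sq_sqrt (hα n).le]
    have hG2 : ∀ n, G n ^ 2 = ‖a n‖ ^ 2 * alph r R n := by
      intro n; rw [hG, mul_pow, Real.sq_sqrt (hα n).le]
    have hFsum2 : Summable fun n => F n ^ 2 := hFsum.congr fun n => (hF2 n).symm
    have hGsum2 : Summable fun n => G n ^ 2 := hsum2.congr fun n => (hG2 n).symm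
    obtain ⟨hFGsum, hFGle⟩ := cs_tsum hF0 hG0 hFsum2 hGsum2
    have hFG : ∀ n : ℤ, F n * G n = ‖((n:ℂ) - (t:ℂ)) * a n‖ := by
      intro n
      rw [norm_mul]
      have h1 : ‖((n:ℂ) - (t:ℂ))‖ = |((n:ℝ) - t)| := by
        rw [show ((n:ℂ) - (t:ℂ)) = (((n:ℝ) - t : ℝ) : ℂ) by push_cast; ring,
          Complex.norm_real, Real.norm_eq_abs]
      have hs := (Real.sqrt_pos.mpr (hα n)).ne'
      rw [h1, hF, hG]
      field_simp
    have hsub : Summable fun n : ℤ => ((n:ℂ) - t) * a n :=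
      Summable.of_norm (hFGsum.congr fun n => hFG n)
    have hmul : Summable fun n : ℤ => (n:ℂ) * a n := by
      refine (hsub.add (hsa.mul_left (t:ℂ))).congr fun n => ?_
      ring
    refine ⟨hmul, ?_⟩
    have hts2 : (∑' n : ℤ, (n:ℂ) * a n) = ∑' n : ℤ, ((n:ℂ) - t) * a n := by
      rw [tsum_congr (fun n : ℤ => show (n:ℂ) * a n = ((n:ℂ) - t) * a n + (t:ℂ) * a n from
        by ring), Summable.tsum_add hsub (hsa.mul_left _), tsum_mul_left, hts, mul_zero, add_zero]
    rw [hts2]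
    have hnorm : ‖∑' n : ℤ, ((n:ℂ) - t) * a n‖ ≤ ∑' n, F n * G n := by
      exact le_trans (norm_tsum_le_tsum_norm (hFGsum.congr fun n => hFG n))
        (le_of_eq (tsum_congr fun n => (hFG n).symm))
    have hFQ : (∑' n, F n ^ 2) = Q := by rw [tsum_congr hF2]; exact hFts
    have hGQ : (∑' n, G n ^ 2) ≤ 1 := le_trans (le_of_eq (tsum_congr hG2)) hle1
    calc ‖∑' n : ℤ, ((n:ℂ) - t) * a n‖ ^ 2
        ≤ (∑' n, F n * G n)^2 := pow_le_pow_left₀ (norm_nonneg _) hnorm 2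
      _ ≤ (∑' n, F n ^ 2) * (∑' n, G n ^ 2) := hFGle
      _ ≤ Q * 1 := by
          rw [hFQ]
          exact mul_le_mul_of_nonneg_left hGQ hQ0
      _ = Q := mul_one Q
  have part2 : ∃ a : ℤ → ℂ,
      Summable (fun n : ℤ => ‖a n‖ ^ 2 * alph r R n) ∧
      (∑' n : ℤ, ‖a n‖ ^ 2 * alph r R n) ≤ 1 ∧
      Summable a ∧ (∑' n : ℤ, a n) = 0 ∧
      ‖∑' n : ℤ, (n : ℂ) * a n‖ ^ 2 = Q := by
    rcases eq_or_lt_of_le hQ0 with hQz | hQpos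
    · refine ⟨0, ?_, ?_, summable_zero, tsum_zero, ?_⟩
      · simpa using summable_zero
      · simp
      · simp [← hQz]
    · set c : ℝ := (Real.sqrt Q)⁻¹ with hc
      have hc2 : c ^ 2 = Q⁻¹ := by
        rw [hc, inv_pow, Real.sq_sqrt hQ0]
      set a : ℤ → ℂ := fun n => ((c * (((n:ℝ) - t) / alph r R n) : ℝ) : ℂ) with ha
      have hab : ∀ n : ℤ, ‖a n‖ ^ 2 * alph r R n
          = c ^ 2 * (((n:ℝ) - t)^2 / alph r R n) := by
        intro n
        rw [ha, Complex.norm_real, Real.norm_eq_abs, sq_abs]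
        have := (hα n).ne'
        field_simp
      have hsum2 : Summable (fun n : ℤ => ‖a n‖ ^ 2 * alph r R n) :=
        (hFsum.mul_left (c^2)).congr fun n => (hab n).symm
      have hts2 : (∑' n : ℤ, ‖a n‖ ^ 2 * alph r R n) = 1 := by
        rw [tsum_congr hab, tsum_mul_left, hFts, hc2, inv_mul_cancel₀ hQpos.ne']
      -- real summand for a
      have hlin : Summable (fun n : ℤ => ((n:ℝ) - t) / alph r R n) :=
        ((comb 0 1 (-t)).1).congr fun n => by rw [show (0 * (n:ℝ)^2 + 1 * (n:ℝ) + -t)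
          = ((n:ℝ) - t) from by ring]
      have hlints : (∑' n : ℤ, ((n:ℝ) - t) / alph r R n) = 0 := by
        rw [← hQ3, ← (comb 0 1 (-t)).2]
        exact tsum_congr fun n => by rw [show (0 * (n:ℝ)^2 + 1 * (n:ℝ) + -t)
          = ((n:ℝ) - t) from by ring]
      have hsa : Summable a := by
        rw [ha]
        exact Complex.summable_ofReal.mpr (hlin.mul_left c)
      have htsa : (∑' n : ℤ, a n) = 0 := by
        rw [ha, ← Complex.ofReal_tsum, tsum_mul_left, hlints, mul_zero, Complex.ofReal_zero]
      have hquad : Summable (fun n : ℤ => (n:ℝ) * (((n:ℝ) - t) / alph r R n)) :=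
        ((comb 1 (-t) 0).1).congr fun n => by
          rw [show (1 * (n:ℝ)^2 + (-t) * (n:ℝ) + 0) = (n:ℝ) * ((n:ℝ) - t) from by ring,
            mul_div_assoc]
      have hquadts : (∑' n : ℤ, (n:ℝ) * (((n:ℝ) - t) / alph r R n)) = Q := by
        rw [← hQ2, ← (comb 1 (-t) 0).2]
        exact tsum_congr fun n => by
          rw [show (1 * (n:ℝ)^2 + (-t) * (n:ℝ) + 0) = (n:ℝ) * ((n:ℝ) - t) from by ring,
            mul_div_assoc]
      have hna : ∀ n : ℤ, (n:ℂ) * a n = (((n:ℝ) * (c * (((n:ℝ) - t) / alph r R n)) : ℝ) : ℂ) := by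
        intro n
        rw [ha]
        push_cast
        ring
      have htsna : (∑' n : ℤ, (n:ℂ) * a n) = ((c * Q : ℝ) : ℂ) := by
        rw [tsum_congr hna, ← Complex.ofReal_tsum]
        congr 1
        have : (fun n : ℤ => (n:ℝ) * (c * (((n:ℝ) - t) / alph r R n)))
            = fun n : ℤ => c * ((n:ℝ) * (((n:ℝ) - t) / alph r R n)) := by
          funext n; ring
        rw [this, tsum_mul_left, hquadts]
      refine ⟨a, hsum2, le_of_eq hts2, hsa, htsa, ?_⟩
      rw [htsna, Complex.norm_real, Real.norm_eq_abs, sq_abs, mul_pow, hc2]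
      field_simp
  refine ⟨fun j _ => hsj j, part1, part2, ?_⟩
  apply IsGreatest.csSup_eq
  constructor
  · obtain ⟨a, h1, h2, h3, h4, h5⟩ := part2
    exact ⟨a, h1, h2, h3, h4, h5.symm⟩
  · rintro x ⟨a, h1, h2, h3, h4, h5⟩
    rw [h5]
    exact (part1 a h1 h2 h3 h4).2
end

section
/- Let 0 < r < 1 < R, set α_n = 2π(r^{2n+1} + R^{2n+1}) for n ∈ ℤ, and let s_j = ∑_{n∈ℤ} n^j/α_n for j = 0, 1, 2, 3, 4 (these series converge absolutely). Then: (i) for every a : ℤ → ℂ such that the family (|a_n|² α_n)_{n∈ℤ} is summable with ∑_{n∈ℤ} |a_n|² α_n ≤ 1, such that (a_n) is summable with ∑_{n∈ℤ} a_n = 0, and such that (n a_n) is summable with ∑_{n∈ℤ} n a_n = 0, the family (n(n−1) a_n)_{n∈ℤ} is summable and |∑_{n∈ℤ} n(n−1) a_n|² ≤ (s_1² s_4 − s_0 s_2 s_4 − 2 s_1 s_2 s_3 + s_0 s_3² + s_2³)/(s_1² − s_0 s_2); (ii) there exists such an a for which equality holds. Hence the supremum of |∑_{n∈ℤ} n(n−1)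 a_n|² over all such a equals (s_1² s_4 − s_0 s_2 s_4 − 2 s_1 s_2 s_3 + s_0 s_3² + s_2³)/(s_1² − s_0 s_2). -/
set_option maxHeartbeats 1000000


lemma summable_main {r R : ℝ} (hr : 0 < r) (hr1 : r < 1) (hR : 1 < R) (j : ℕ) :
    Summable (fun n : ℤ => (n:ℝ)^j / alph r R n) := by
  have hR0 : (0:ℝ) < R := lt_trans one_pos hR
  have hpi := Real.pi_pos
  apply Summable.of_nat_of_neg
  · -- positive side
    have hn1 : ‖(R^2)⁻¹‖ < 1 := by
      rw [norm_inv, Real.norm_eq_abs, abs_of_pos (by positivity), inv_lt_one_iff₀]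
      right; nlinarith
    have hb : Summable (fun m : ℕ => (m:ℝ)^j * ((R^2)⁻¹)^m / (2*Real.pi)) :=
      (summable_pow_mul_geometric_of_norm_lt_one j hn1).div_const _
    refine Summable.of_nonneg_of_le
      (fun m => div_nonneg (by positivity) (alph_pos hr hR0 _).le) (fun m => ?_) hb
    have hαb : 2*Real.pi * (R^2)^m ≤ alph r R (m:ℤ) := by
      have h1 : (R^2)^m = R ^ (2*(m:ℤ)) := by
        rw [show (2*(m:ℤ)) = ((2*m : ℕ) : ℤ) by push_cast; ring, zpow_natCast, pow_mul]
      have h2 : R ^ (2*(m:ℤ)) ≤ R ^ (2*(m:ℤ)+1) :=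
        zpow_le_zpow_right₀ hR.le (by omega)
      have h3 : (0:ℝ) < r ^ (2*(m:ℤ)+1) := zpow_pos hr _
      unfold alph; nlinarith [h1 ▸ h2]
    calc (m:ℝ)^j / alph r R (m:ℤ) ≤ (m:ℝ)^j / (2*Real.pi * (R^2)^m) :=
          div_le_div_of_nonneg_left (by positivity) (by positivity) hαb
      _ = (m:ℝ)^j * ((R^2)⁻¹)^m / (2*Real.pi) := by
          rw [inv_pow, mul_comm (2*Real.pi) ((R^2)^m), ← div_div, div_eq_mul_inv ((m:ℝ)^j)]
  · -- negative side
    have hn2 : ‖r^2‖ < 1 := by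
      rw [Real.norm_eq_abs, abs_of_pos (by positivity)]; nlinarith
    have hb : Summable (fun m : ℕ => (m:ℝ)^j * (r^2)^m / (2*Real.pi*r)) :=
      (summable_pow_mul_geometric_of_norm_lt_one j hn2).div_const _
    refine Summable.of_norm_bounded hb (fun m => ?_)
    have hα : (0:ℝ) < alph r R (-(m:ℤ)) := alph_pos hr hR0 _
    have hαb : 2*Real.pi*r * ((r^2)⁻¹)^m ≤ alph r R (-(m:ℤ)) := by
      have h1 : r ^ (2*(-(m:ℤ))+1) = r * ((r^2)⁻¹)^m := by
        rw [show (2*(-(m:ℤ))+1) = 1 + (-(2*m:ℕ) : ℤ) by push_cast; ring,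
          zpow_add₀ (ne_of_gt hr), zpow_one, zpow_neg, zpow_natCast, pow_mul, inv_pow]
      have h2 : (0:ℝ) < R ^ (2*(-(m:ℤ))+1) := zpow_pos hR0 _
      unfold alph; nlinarith [h1]
    have hnorm : ‖((-(m:ℤ) : ℤ):ℝ)^j / alph r R (-(m:ℤ))‖ = (m:ℝ)^j / alph r R (-(m:ℤ)) := by
      rw [Real.norm_eq_abs, abs_div, abs_of_pos hα, abs_pow]
      congr 2
      push_cast
      rw [abs_neg, abs_of_nonneg (Nat.cast_nonneg m)]
    rw [hnorm]
    calc (m:ℝ)^j / alph r R (-(m:ℤ)) ≤ (m:ℝ)^j / (2*Real.pi*r * ((r^2)⁻¹)^m) :=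
          div_le_div_of_nonneg_left (by positivity) (by positivity) hαb
      _ = (m:ℝ)^j * (r^2)^m / (2*Real.pi*r) := by
          rw [inv_pow, mul_comm (2*Real.pi*r) _, ← div_div, div_inv_eq_mul]

lemma hasSum_poly {r R : ℝ} (hr : 0 < r) (hr1 : r < 1) (hR : 1 < R)
    (c0 c1 c2 c3 c4 : ℝ) :
    HasSum (fun n : ℤ => (c4*(n:ℝ)^4 + c3*(n:ℝ)^3 + c2*(n:ℝ)^2 + c1*(n:ℝ) + c0)/alph r R n)
      (c4 * sj r R 4 + c3 * sj r R 3 + c2 * sj r R 2 + c1 * sj r R 1 + c0 * sj r R 0) := by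
  have h : ∀ j : ℕ, HasSum (fun n : ℤ => (n:ℝ)^j / alph r R n) (sj r R j) :=
    fun j => (summable_main hr hr1 hR j).hasSum
  have H := ((((((h 4).mul_left c4).add ((h 3).mul_left c3)).add
      ((h 2).mul_left c2)).add ((h 1).mul_left c1)).add ((h 0).mul_left c0))
  have hfun : (fun n : ℤ => (c4*((n:ℝ)^4/alph r R n) + c3*((n:ℝ)^3/alph r R n)
        + c2*((n:ℝ)^2/alph r R n)) + c1*((n:ℝ)^1/alph r R n) + c0*((n:ℝ)^0/alph r R n))
      = fun n : ℤ => (c4*(n:ℝ)^4 + c3*(n:ℝ)^3 + c2*(n:ℝ)^2 + c1*(n:ℝ) + c0)/alph r R n := by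
    funext n; ring
  rw [hfun] at H
  exact H

lemma tsum_cs {f g : ℤ → ℝ} (hf : Summable (fun n => f n ^ 2)) (hg : Summable (fun n => g n ^ 2))
    (hf0 : ∀ n, 0 ≤ f n) (hg0 : ∀ n, 0 ≤ g n) :
    Summable (fun n => f n * g n) ∧
    (∑' n, f n * g n) ≤ Real.sqrt (∑' n, f n ^ 2) * Real.sqrt (∑' n, g n ^ 2) := by
  have hsum : Summable (fun n => f n * g n) := by
    refine Summable.of_nonneg_of_le (fun n => mul_nonneg (hf0 n) (hg0 n)) (fun n => ?_)
      (((hf.add hg)).div_const 2)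
    nlinarith [sq_nonneg (f n - g n)]
  refine ⟨hsum, Summable.tsum_le_of_sum_le hsum (fun s => ?_)⟩
  calc ∑ n ∈ s, f n * g n
      ≤ Real.sqrt (∑ n ∈ s, f n ^ 2) * Real.sqrt (∑ n ∈ s, g n ^ 2) :=
        Real.sum_mul_le_sqrt_mul_sqrt s f g
    _ ≤ Real.sqrt (∑' n, f n ^ 2) * Real.sqrt (∑' n, g n ^ 2) := by
        apply mul_le_mul
        · exact Real.sqrt_le_sqrt (Summable.sum_le_tsum s (fun n _ => sq_nonneg _) hf)
        · exact Real.sqrt_le_sqrt (Summable.sum_le_tsum s (fun n _ => sq_nonneg _) hg)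
        · positivity
        · positivity

/-- key Cauchy–Schwarz application -/
lemma key_cs {r R : ℝ} (hr : 0 < r) (hR0 : 0 < R) (g : ℤ → ℝ)
    (hg : Summable (fun n : ℤ => g n ^ 2 / alph r R n)) (a : ℤ → ℂ)
    (ha : Summable (fun n : ℤ => ‖a n‖ ^ 2 * alph r R n)) :
    Summable (fun n : ℤ => (g n : ℂ) * a n) ∧
    ‖∑' n : ℤ, (g n : ℂ) * a n‖ ≤
      Real.sqrt (∑' n : ℤ, g n ^ 2 / alph r R n) *
      Real.sqrt (∑' n : ℤ, ‖a n‖ ^ 2 * alph r R n) := by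
  set f1 : ℤ → ℝ := fun n => |g n| / Real.sqrt (alph r R n) with hf1
  set f2 : ℤ → ℝ := fun n => ‖a n‖ * Real.sqrt (alph r R n) with hf2
  have hα : ∀ n, 0 < alph r R n := alph_pos hr hR0
  have e1 : (fun n => f1 n ^ 2) = fun n => g n ^ 2 / alph r R n := by
    funext n
    rw [hf1, div_pow, sq_abs, Real.sq_sqrt (hα n).le]
  have e2 : (fun n => f2 n ^ 2) = fun n => ‖a n‖ ^ 2 * alph r R n := by
    funext n
    rw [hf2, mul_pow, Real.sq_sqrt (hα n).le]
  have e3 : (fun n => f1 n * f2 n) = fun n => ‖(g n : ℂ) * a n‖ := by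
    funext n
    have hs : Real.sqrt (alph r R n) ≠ 0 := ne_of_gt (Real.sqrt_pos.mpr (hα n))
    rw [hf1, hf2, norm_mul, Complex.norm_real, Real.norm_eq_abs]
    field_simp
  obtain ⟨hsum, hle⟩ := tsum_cs (e1 ▸ hg) (e2 ▸ ha)
    (fun n => by positivity) (fun n => by positivity)
  rw [e3] at hsum hle
  rw [e1, e2] at hle
  refine ⟨Summable.of_norm hsum, ?_⟩
  calc ‖∑' n : ℤ, (g n : ℂ) * a n‖ = ‖∑' n : ℤ, (g n : ℂ) * a n‖ := rfl
    _ ≤ ∑' n : ℤ, ‖(g n : ℂ) * a n‖ := norm_tsum_le_tsum_norm hsum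
    _ ≤ _ := hle

/-- The series `s_j` (j = 0,…,4) converge; (i) every `a : ℤ → ℂ` with `∑ |aₙ|² αₙ ≤ 1`,
`∑ aₙ = 0`, `∑ n aₙ = 0` has `(n(n−1) aₙ)` summable with
`|∑ n(n−1) aₙ|² ≤ (s₁²s₄ − s₀s₂s₄ − 2s₁s₂s₃ + s₀s₃² + s₂³)/(s₁² − s₀s₂)`; (ii) equality
is attained; hence the supremum of `|∑ n(n−1) aₙ|²` over all such `a` equals this value
(this is the maximal domain function `J⁽²⁾_{A(r,R)}(1)`). -/
theorem stmt3 (r R : ℝ) (hr : 0 < r) (hr1 : r < 1) (hR : 1 < R) :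
    (∀ j : ℕ, j ≤ 4 → Summable (fun n : ℤ => (n : ℝ) ^ j / alph r R n)) ∧
    (∀ a : ℤ → ℂ,
      Summable (fun n : ℤ => ‖a n‖ ^ 2 * alph r R n) →
      (∑' n : ℤ, ‖a n‖ ^ 2 * alph r R n) ≤ 1 →
      Summable a → (∑' n : ℤ, a n) = 0 →
      Summable (fun n : ℤ => (n : ℂ) * a n) → (∑' n : ℤ, (n : ℂ) * a n) = 0 →
      Summable (fun n : ℤ => (n : ℂ) * ((n : ℂ) - 1) * a n) ∧
        ‖∑' n : ℤ, (n : ℂ) * ((n : ℂ) - 1) * a n‖ ^ 2 ≤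
          (sj r R 1 ^ 2 * sj r R 4 - sj r R 0 * sj r R 2 * sj r R 4
            - 2 * sj r R 1 * sj r R 2 * sj r R 3 + sj r R 0 * sj r R 3 ^ 2
            + sj r R 2 ^ 3) / (sj r R 1 ^ 2 - sj r R 0 * sj r R 2)) ∧
    (∃ a : ℤ → ℂ,
      Summable (fun n : ℤ => ‖a n‖ ^ 2 * alph r R n) ∧
      (∑' n : ℤ, ‖a n‖ ^ 2 * alph r R n) ≤ 1 ∧
      Summable a ∧ (∑' n : ℤ, a n) = 0 ∧
      Summable (fun n : ℤ => (n : ℂ) * a n) ∧ (∑' n : ℤ, (n : ℂ) * a n) = 0 ∧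
      ‖∑' n : ℤ, (n : ℂ) * ((n : ℂ) - 1) * a n‖ ^ 2 =
        (sj r R 1 ^ 2 * sj r R 4 - sj r R 0 * sj r R 2 * sj r R 4
          - 2 * sj r R 1 * sj r R 2 * sj r R 3 + sj r R 0 * sj r R 3 ^ 2
          + sj r R 2 ^ 3) / (sj r R 1 ^ 2 - sj r R 0 * sj r R 2)) ∧
    sSup {x : ℝ | ∃ a : ℤ → ℂ,
      Summable (fun n : ℤ => ‖a n‖ ^ 2 * alph r R n) ∧
      (∑' n : ℤ, ‖a n‖ ^ 2 * alph r R n) ≤ 1 ∧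
      Summable a ∧ (∑' n : ℤ, a n) = 0 ∧
      Summable (fun n : ℤ => (n : ℂ) * a n) ∧ (∑' n : ℤ, (n : ℂ) * a n) = 0 ∧
      x = ‖∑' n : ℤ, (n : ℂ) * ((n : ℂ) - 1) * a n‖ ^ 2} =
      (sj r R 1 ^ 2 * sj r R 4 - sj r R 0 * sj r R 2 * sj r R 4
        - 2 * sj r R 1 * sj r R 2 * sj r R 3 + sj r R 0 * sj r R 3 ^ 2
        + sj r R 2 ^ 3) / (sj r R 1 ^ 2 - sj r R 0 * sj r R 2) := by
  have hR0 : (0:ℝ) < R := lt_trans one_pos hR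
  have hα : ∀ n, 0 < alph r R n := alph_pos hr hR0
  set s0 := sj r R 0 with hs0def
  set s1 := sj r R 1 with hs1def
  set s2 := sj r R 2 with hs2def
  set s3 := sj r R 3 with hs3def
  set s4 := sj r R 4 with hs4def
  -- positivity of s0
  have hs0 : 0 < s0 := by
    have h1 : ((0:ℤ):ℝ)^0 / alph r R 0 ≤ s0 := by
      rw [hs0def]
      exact Summable.le_tsum (summable_main hr hr1 hR 0) 0
        (fun m _ => div_nonneg (by positivity) (hα m).le)
    have h2 : (0:ℝ) < ((0:ℤ):ℝ)^0 / alph r R 0 := by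
      simp only [pow_zero]
      exact div_pos one_pos (hα 0)
    linarith
  -- strict Cauchy-Schwarz: 0 < s0*s2 - s1^2
  have hD : 0 < s0*s2 - s1^2 := by
    set t : ℝ := s1 / s0 with htdef
    have hq := hasSum_poly hr hr1 hR (t^2) (-2*t) 1 0 0
    rw [← hs0def, ← hs1def, ← hs2def, ← hs3def, ← hs4def] at hq
    have hval : ∀ n : ℤ, (0*(n:ℝ)^4 + 0*(n:ℝ)^3 + 1*(n:ℝ)^2 + (-2*t)*(n:ℝ) + t^2)/alph r R n
        = ((n:ℝ) - t)^2 / alph r R n := fun n => by ring_nf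
    have hpos : 0 < 0*s4 + 0*s3 + 1*s2 + (-2*t)*s1 + t^2*s0 := by
      obtain ⟨n0, hn0⟩ : ∃ n0 : ℤ, ((n0:ℝ) - t)^2 > 0 := by
        by_cases ht : t = 0
        · exact ⟨1, by rw [ht]; norm_num⟩
        · refine ⟨0, ?_⟩
          have hne : ((0:ℤ):ℝ) - t ≠ 0 := by simpa using ht
          have h2 := pow_pos (abs_pos.mpr hne) 2
          rwa [sq_abs] at h2
      have hle := Summable.le_tsum hq.summable n0
        (fun m _ => by rw [hval m]; exact div_nonneg (sq_nonneg _) (hα m).le)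
      rw [hq.tsum_eq] at hle
      have : 0 < (0*(n0:ℝ)^4 + 0*(n0:ℝ)^3 + 1*(n0:ℝ)^2 + (-2*t)*(n0:ℝ) + t^2)/alph r R n0 := by
        rw [hval n0]; exact div_pos hn0 (hα n0)
      linarith
    have ht' : t * s0 = s1 := by rw [htdef]; field_simp
    nlinarith [hpos, hs0, ht']
  have hDne : s0*s2 - s1^2 ≠ 0 := ne_of_gt hD
  have hD2 : s1^2 - s0*s2 ≠ 0 := by intro h; apply hDne; linarith
  set lam : ℝ := (s2*(s2-s1) - s1*(s3-s2))/(s0*s2 - s1^2) with hlamdef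
  set mu : ℝ := (s0*(s3-s2) - s1*(s2-s1))/(s0*s2 - s1^2) with hmudef
  have hΛ : lam*s0 + mu*s1 = s2 - s1 := by
    rw [hlamdef, hmudef, div_mul_eq_mul_div, div_mul_eq_mul_div, ← add_div, div_eq_iff hDne]; ring
  have hM : lam*s1 + mu*s2 = s3 - s2 := by
    rw [hlamdef, hmudef, div_mul_eq_mul_div, div_mul_eq_mul_div, ← add_div, div_eq_iff hDne]; ring
  set V : ℝ := (s1^2*s4 - s0*s2*s4 - 2*s1*s2*s3 + s0*s3^2 + s2^3)/(s1^2 - s0*s2) with hVdef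
  set q : ℤ → ℝ := fun n => (n:ℝ)^2 - (1+mu)*(n:ℝ) - lam with hqdef
  set E : ℝ := 1*s4 + (-2*(1+mu))*s3 + ((1+mu)^2-2*lam)*s2 + (2*lam*(1+mu))*s1 + lam^2*s0
    with hEdef
  -- HasSum for q²/α
  have hE : HasSum (fun n : ℤ => q n ^ 2 / alph r R n) E := by
    have h := hasSum_poly hr hr1 hR (lam^2) (2*lam*(1+mu)) ((1+mu)^2-2*lam) (-2*(1+mu)) 1
    rw [← hs0def, ← hs1def, ← hs2def, ← hs3def, ← hs4def] at h
    have hfun : (fun n : ℤ => (1*(n:ℝ)^4 + (-2*(1+mu))*(n:ℝ)^3 + ((1+mu)^2-2*lam)*(n:ℝ)^2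
        + (2*lam*(1+mu))*(n:ℝ) + lam^2)/alph r R n) = fun n : ℤ => q n ^ 2 / alph r R n := by
      funext n; rw [hqdef]; ring
    rw [hfun] at h
    exact h
  have hEV : E = V := by
    rw [hEdef, hVdef, hlamdef, hmudef]
    field_simp
    ring
  have hE0 : 0 ≤ E := by
    rw [← hE.tsum_eq]
    exact tsum_nonneg (fun n => div_nonneg (sq_nonneg _) (hα n).le)
  have hEpos : 0 < E := by
    obtain ⟨n0, hn0⟩ : ∃ n0 : ℤ, q n0 ≠ 0 := by
      by_cases hl : lam = 0
      · by_cases hm : mu = 0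
        · refine ⟨2, ?_⟩; rw [hqdef]; simp [hl, hm]; norm_num
        · refine ⟨1, ?_⟩; rw [hqdef]; push_cast; intro h; apply hm; linarith
      · refine ⟨0, ?_⟩; rw [hqdef]; push_cast; intro h; apply hl; linarith
    have hle := Summable.le_tsum hE.summable n0
      (fun m _ => div_nonneg (sq_nonneg _) (hα m).le)
    rw [hE.tsum_eq] at hle
    have : 0 < q n0 ^2 / alph r R n0 := div_pos (by positivity) (hα n0)
    linarith
  -- HasSum for q/α and n·q/α, both 0
  have hP0 : HasSum (fun n : ℤ => q n / alph r R n) 0 := by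
    have h := hasSum_poly hr hr1 hR (-lam) (-(1+mu)) 1 0 0
    rw [← hs0def, ← hs1def, ← hs2def, ← hs3def, ← hs4def] at h
    have hfun : (fun n : ℤ => (0*(n:ℝ)^4 + 0*(n:ℝ)^3 + 1*(n:ℝ)^2 + (-(1+mu))*(n:ℝ)
        + -lam)/alph r R n) = fun n : ℤ => q n / alph r R n := by
      funext n; rw [hqdef]; ring
    rw [hfun] at h
    have hzero : 0*s4 + 0*s3 + 1*s2 + (-(1+mu))*s1 + -lam*s0 = 0 := by linarith
    rwa [hzero] at h
  have hP1 : HasSum (fun n : ℤ => (n:ℝ) * (q n / alph r R n)) 0 := by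
    have h := hasSum_poly hr hr1 hR 0 (-lam) (-(1+mu)) 1 0
    rw [← hs0def, ← hs1def, ← hs2def, ← hs3def, ← hs4def] at h
    have hfun : (fun n : ℤ => (0*(n:ℝ)^4 + 1*(n:ℝ)^3 + (-(1+mu))*(n:ℝ)^2 + (-lam)*(n:ℝ)
        + 0)/alph r R n) = fun n : ℤ => (n:ℝ) * (q n / alph r R n) := by
      funext n; rw [hqdef]; ring
    rw [hfun] at h
    have hzero : 0*s4 + 1*s3 + (-(1+mu))*s2 + -lam*s1 + 0*s0 = 0 := by linarith
    rwa [hzero] at h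
  have hP2 : HasSum (fun n : ℤ => ((n:ℝ)^2 - (n:ℝ)) * (q n / alph r R n)) E := by
    have h := hasSum_poly hr hr1 hR 0 lam (1+mu-lam) (-(2+mu)) 1
    rw [← hs0def, ← hs1def, ← hs2def, ← hs3def, ← hs4def] at h
    have hfun : (fun n : ℤ => (1*(n:ℝ)^4 + (-(2+mu))*(n:ℝ)^3 + (1+mu-lam)*(n:ℝ)^2 + lam*(n:ℝ)
        + 0)/alph r R n) = fun n : ℤ => ((n:ℝ)^2 - (n:ℝ)) * (q n / alph r R n) := by
      funext n; rw [hqdef]; ring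
    rw [hfun] at h
    have hzero : 1*s4 + (-(2+mu))*s3 + (1+mu-lam)*s2 + lam*s1 + 0*s0 = E := by
      rw [hEdef]; linear_combination (-lam)*hΛ + (-mu)*hM
    rwa [hzero] at h
  -- part (i)
  have hineq : ∀ a : ℤ → ℂ,
      Summable (fun n : ℤ => ‖a n‖ ^ 2 * alph r R n) →
      (∑' n : ℤ, ‖a n‖ ^ 2 * alph r R n) ≤ 1 →
      Summable a → (∑' n : ℤ, a n) = 0 →
      Summable (fun n : ℤ => (n : ℂ) * a n) → (∑' n : ℤ, (n : ℂ) * a n) = 0 →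
      Summable (fun n : ℤ => (n : ℂ) * ((n : ℂ) - 1) * a n) ∧
        ‖∑' n : ℤ, (n : ℂ) * ((n : ℂ) - 1) * a n‖ ^ 2 ≤
          (s1 ^ 2 * s4 - s0 * s2 * s4 - 2 * s1 * s2 * s3 + s0 * s3 ^ 2 + s2 ^ 3)
            / (s1 ^ 2 - s0 * s2) := by
    intro a hA hA1 ha ha0 hna hna0
    -- summability of n(n-1)a
    have hg2sum : Summable (fun n : ℤ => ((n:ℝ)^2 - (n:ℝ)) ^ 2 / alph r R n) := by
      have h := (hasSum_poly hr hr1 hR 0 0 1 (-2) 1).summable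
      have hfun : (fun n : ℤ => (1*(n:ℝ)^4 + (-2)*(n:ℝ)^3 + 1*(n:ℝ)^2 + 0*(n:ℝ)
          + 0)/alph r R n) = fun n : ℤ => ((n:ℝ)^2 - (n:ℝ)) ^ 2 / alph r R n := by
        funext n; ring
      rwa [hfun] at h
    have hT0 := (key_cs hr hR0 (fun n => (n:ℝ)^2 - (n:ℝ)) hg2sum a hA).1
    have hTfun : (fun n : ℤ => ((((n:ℝ)^2 - (n:ℝ)) : ℝ) : ℂ) * a n)
        = fun n : ℤ => (n:ℂ) * ((n:ℂ) - 1) * a n := by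
      funext n; push_cast; ring
    rw [hTfun] at hT0
    refine ⟨hT0, ?_⟩
    -- Cauchy-Schwarz with q
    obtain ⟨hQ, hQle⟩ := key_cs hr hR0 q hE.summable a hA
    have hqa : (fun n : ℤ => (q n : ℂ) * a n)
        = fun n : ℤ => (n:ℂ)*((n:ℂ)-1)*a n - (mu:ℂ)*((n:ℂ)*a n) - (lam:ℂ)*(a n) := by
      funext n; rw [hqdef]; push_cast; ring
    have hsum_eq : (∑' n : ℤ, (q n : ℂ) * a n) = ∑' n : ℤ, (n:ℂ)*((n:ℂ)-1)*a n := by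
      rw [hqa, Summable.tsum_sub (hT0.sub (hna.mul_left _)) (ha.mul_left _),
        Summable.tsum_sub hT0 (hna.mul_left _), tsum_mul_left, tsum_mul_left, hna0, ha0,
        mul_zero, mul_zero, sub_zero, sub_zero]
    rw [hsum_eq, hE.tsum_eq] at hQle
    have hA0 : 0 ≤ ∑' n : ℤ, ‖a n‖ ^ 2 * alph r R n :=
      tsum_nonneg (fun n => mul_nonneg (by positivity) (hα n).le)
    calc ‖∑' n : ℤ, (n:ℂ)*((n:ℂ)-1)*a n‖ ^ 2
        ≤ (Real.sqrt E * Real.sqrt (∑' n : ℤ, ‖a n‖ ^ 2 * alph r R n))^2 :=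
          pow_le_pow_left₀ (norm_nonneg _) hQle 2
      _ = E * (∑' n : ℤ, ‖a n‖ ^ 2 * alph r R n) := by
          rw [mul_pow, Real.sq_sqrt hE0, Real.sq_sqrt hA0]
      _ ≤ E * 1 := mul_le_mul_of_nonneg_left hA1 hE0
      _ = (s1^2*s4 - s0*s2*s4 - 2*s1*s2*s3 + s0*s3^2 + s2^3)/(s1^2 - s0*s2) := by
          rw [mul_one, hEV]
  -- extremizer
  set sqE : ℝ := Real.sqrt E with hsqEdef
  have hsqE : 0 < sqE := Real.sqrt_pos.mpr hEpos
  set aex : ℤ → ℂ := fun n => (((q n / alph r R n) / sqE : ℝ) : ℂ) with haexdef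
  have hex1 : Summable (fun n : ℤ => ‖aex n‖ ^ 2 * alph r R n) ∧
      (∑' n : ℤ, ‖aex n‖ ^ 2 * alph r R n) = 1 := by
    have e : (fun n : ℤ => ‖aex n‖ ^ 2 * alph r R n)
        = fun n : ℤ => (q n ^ 2 / alph r R n) / E := by
      funext n
      rw [haexdef]
      simp only [Complex.norm_real, Real.norm_eq_abs, sq_abs]
      rw [div_pow, div_pow, hsqEdef, Real.sq_sqrt hE0, pow_two (alph r R n), div_div,
        div_mul_eq_mul_div, mul_comm (q n ^ 2) (alph r R n), mul_assoc,
        mul_div_mul_left _ _ (hα n).ne', ← div_div]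
    constructor
    · rw [e]; exact hE.summable.div_const E
    · rw [e, tsum_div_const, hE.tsum_eq, div_self (ne_of_gt hEpos)]
  have hex2 : HasSum aex 0 := by
    have h := (hP0.div_const sqE)
    have h2 : HasSum (fun n : ℤ => ((q n / alph r R n / sqE : ℝ) : ℂ)) ((0:ℝ)/sqE : ℝ) :=
      Complex.hasSum_ofReal.mpr h
    rw [zero_div, Complex.ofReal_zero] at h2
    exact h2
  have hex3 : HasSum (fun n : ℤ => (n:ℂ) * aex n) 0 := by
    have h := Complex.hasSum_ofReal.mpr ((hP1.div_const sqE) : HasSum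
      (fun n : ℤ => (n:ℝ) * (q n / alph r R n) / sqE) ((0:ℝ)/sqE))
    rw [zero_div, Complex.ofReal_zero] at h
    have hfun : (fun n : ℤ => (((n:ℝ) * (q n / alph r R n) / sqE : ℝ) : ℂ))
        = fun n : ℤ => (n:ℂ) * aex n := by
      funext n; rw [haexdef]; push_cast; ring
    rwa [hfun] at h
  have hex4 : HasSum (fun n : ℤ => (n:ℂ) * ((n:ℂ) - 1) * aex n) ((E / sqE : ℝ) : ℂ) := by
    have h := Complex.hasSum_ofReal.mpr ((hP2.div_const sqE) : HasSum
      (fun n : ℤ => ((n:ℝ)^2 - (n:ℝ)) * (q n / alph r R n) / sqE) (E/sqE))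
    have hfun : (fun n : ℤ => ((((n:ℝ)^2 - (n:ℝ)) * (q n / alph r R n) / sqE : ℝ) : ℂ))
        = fun n : ℤ => (n:ℂ) * ((n:ℂ) - 1) * aex n := by
      funext n; rw [haexdef]; push_cast; ring
    rwa [hfun] at h
  have hexval : ‖∑' n : ℤ, (n:ℂ) * ((n:ℂ) - 1) * aex n‖ ^ 2 =
      (s1^2*s4 - s0*s2*s4 - 2*s1*s2*s3 + s0*s3^2 + s2^3)/(s1^2 - s0*s2) := by
    rw [hex4.tsum_eq, Complex.norm_real, Real.norm_eq_abs, abs_of_nonneg (by positivity), hsqEdef,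
      Real.div_sqrt, Real.sq_sqrt hE0, hEV]
  have hexist : ∃ a : ℤ → ℂ,
      Summable (fun n : ℤ => ‖a n‖ ^ 2 * alph r R n) ∧
      (∑' n : ℤ, ‖a n‖ ^ 2 * alph r R n) ≤ 1 ∧
      Summable a ∧ (∑' n : ℤ, a n) = 0 ∧
      Summable (fun n : ℤ => (n : ℂ) * a n) ∧ (∑' n : ℤ, (n : ℂ) * a n) = 0 ∧
      ‖∑' n : ℤ, (n : ℂ) * ((n : ℂ) - 1) * a n‖ ^ 2 =
        (s1 ^ 2 * s4 - s0 * s2 * s4 - 2 * s1 * s2 * s3 + s0 * s3 ^ 2 + s2 ^ 3)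
          / (s1 ^ 2 - s0 * s2) :=
    ⟨aex, hex1.1, le_of_eq hex1.2, hex2.summable, hex2.tsum_eq, hex3.summable,
      hex3.tsum_eq, hexval⟩
  refine ⟨fun j _ => summable_main hr hr1 hR j, hineq, hexist, ?_⟩
  apply le_antisymm
  · apply csSup_le
    · obtain ⟨a, h1, h2, h3, h4, h5, h6, h7⟩ := hexist
      exact ⟨_, a, h1, h2, h3, h4, h5, h6, h7.symm⟩
    · rintro x ⟨a, h1, h2, h3, h4, h5, h6, rfl⟩
      exact (hineq a h1 h2 h3 h4 h5 h6).2
  · apply le_csSup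
    · refine ⟨(s1^2*s4 - s0*s2*s4 - 2*s1*s2*s3 + s0*s3^2 + s2^3)/(s1^2 - s0*s2), ?_⟩
      rintro x ⟨a, h1, h2, h3, h4, h5, h6, rfl⟩
      exact (hineq a h1 h2 h3 h4 h5 h6).2
    · obtain ⟨a, h1, h2, h3, h4, h5, h6, h7⟩ := hexist
      exact ⟨a, h1, h2, h3, h4, h5, h6, h7.symm⟩
end

section
/- Fix λ ∈ (0,1) and for r ∈ (0,1) let F(r) = ∑_{n∈ℤ} r^{2nλ}/(1 + r^{2n+1}) (this series converges absolutely, and F(r) = 2π S_r(r^λ) = c_{A_r}(r^λ)). Then, as r → 0+: F(r) → 1 if 0 < λ < 1/2; F(r) → 2 if λ = 1/2; and F(r) → +∞ if 1/2 < λ < 1. -/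
open Filter Topology

/-- The Laplacian on `ℂ ≅ ℝ²`: sum of the second derivatives in the directions `1` and `i`. -/
noncomputable def lap (f : ℂ → ℝ) (z : ℂ) : ℝ :=
  deriv (deriv fun t : ℝ => f (z + (t : ℂ))) 0 +
    deriv (deriv fun t : ℝ => f (z + (t : ℂ) * Complex.I)) 0

/-- The annulus `A_r = {z : r < |z| < 1}`. -/
def ann (r : ℝ) : Set ℂ := {z : ℂ | r < ‖z‖ ∧ ‖z‖ < 1}

/-- The Szegő kernel of `A_r` on the diagonal:
`S_r(z) = (1/(2π)) ∑_{n∈ℤ} |z|^{2n}/(1 + r^{2n+1})` (integer powers). -/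
noncomputable def Skern (r : ℝ) (z : ℂ) : ℝ :=
  1 / (2 * Real.pi) * ∑' n : ℤ, ‖z‖ ^ (2 * n) / (1 + r ^ (2 * n + 1))

/-- The Szegő metric of `A_r`: `s_r(z) = (1/2)√(Δ log S_r(z))`. -/
noncomputable def szego (r : ℝ) (z : ℂ) : ℝ :=
  1 / 2 * Real.sqrt (lap (fun w => Real.log (Skern r w)) z)

/-- The Gaussian curvature of the Carathéodory metric `c_{A_r} = 2π S_r` of `A_r`. -/
noncomputable def kappaC (r : ℝ) (z : ℂ) : ℝ :=
  -lap (fun w => Real.log (2 * Real.pi * Skern r w)) z / (2 * Real.pi * Skern r z) ^ 2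

/-- The Gaussian curvature of the Szegő metric of `A_r`. -/
noncomputable def kappaS (r : ℝ) (z : ℂ) : ℝ :=
  -lap (fun w => Real.log (szego r w)) z / szego r z ^ 2

namespace Stmt7Aux

open Real

/-- The general term of the series. -/
noncomputable def f (lam r : ℝ) (n : ℤ) : ℝ :=
  r ^ (2 * (n : ℝ) * lam) / (1 + r ^ (2 * n + 1))

variable {lam r : ℝ}

lemma denom_pos (hr : 0 < r) (n : ℤ) : 0 < 1 + r ^ (2 * n + 1) := by positivity

lemma f_nonneg (hr : 0 < r) (n : ℤ) : 0 ≤ f lam r n :=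
  div_nonneg (rpow_nonneg hr.le _) (denom_pos hr n).le

lemma f_le (hr : 0 < r) (n : ℤ) : f lam r n ≤ r ^ (2 * (n : ℝ) * lam) :=
  div_le_self (rpow_nonneg hr.le _) (le_add_of_nonneg_right (zpow_nonneg hr.le _))

lemma f_nat_le (hr : 0 < r) (n : ℕ) : f lam r n ≤ (r ^ (2 * lam)) ^ n := by
  refine (f_le hr n).trans_eq ?_
  rw [← Real.rpow_natCast (r ^ (2 * lam)) n, ← Real.rpow_mul hr.le]
  push_cast
  ring_nf

lemma f_zero (hr : 0 < r) : f lam r 0 = 1 / (1 + r) := by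
  simp [f]

lemma f_neg_le (hr : 0 < r) (m : ℕ) :
    f lam r (-(m + 1)) ≤ r ^ (2 * ((m : ℝ) + 1) * (1 - lam) - 1) := by
  have h1 : (0 : ℝ) < r ^ (2 * (-((m : ℤ) + 1)) + 1) := zpow_pos hr _
  have h2 : f lam r (-(m + 1)) ≤
      r ^ (2 * ((-((m : ℤ) + 1) : ℤ) : ℝ) * lam) / r ^ (2 * (-((m : ℤ) + 1)) + 1) := by
    unfold f
    gcongr
    exact le_add_of_nonneg_left zero_le_one
  refine h2.trans_eq ?_
  rw [← Real.rpow_intCast r (2 * (-((m : ℤ) + 1)) + 1), ← Real.rpow_sub hr]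
  congr 1
  push_cast
  ring


lemma f_neg_le' (hr0 : 0 < r) (hr1 : r ≤ 1) (hlam : lam ≤ 1 / 2) (m : ℕ) :
    f lam r (-(m + 1)) ≤ r ^ (1 - 2 * lam) * r ^ m := by
  refine (f_neg_le hr0 m).trans ?_
  have h : r ^ (2 * ((m : ℝ) + 1) * (1 - lam) - 1) ≤ r ^ ((1 - 2 * lam) + m) := by
    apply rpow_le_rpow_of_exponent_ge hr0 hr1
    nlinarith [Nat.cast_nonneg (α := ℝ) m]
  refine h.trans_eq ?_
  rw [Real.rpow_add hr0, Real.rpow_natCast]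

lemma summable_nat (hr0 : 0 < r) (hr1 : r < 1) (hlam0 : 0 < lam) :
    Summable fun n : ℕ => f lam r n := by
  refine Summable.of_nonneg_of_le (fun n => f_nonneg hr0 _) (fun n => f_nat_le hr0 n) ?_
  exact summable_geometric_of_lt_one (rpow_nonneg hr0.le _)
    (Real.rpow_lt_one hr0.le hr1 (by positivity))

lemma summable_neg (hr0 : 0 < r) (hr1 : r < 1) (hlam1 : lam < 1) :
    Summable fun m : ℕ => f lam r (-(m + 1)) := by
  have hq : Summable fun m : ℕ => r ^ (2 * (1 - lam) - 1) * (r ^ (2 * (1 - lam))) ^ m :=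
    (summable_geometric_of_lt_one (rpow_nonneg hr0.le _)
      (Real.rpow_lt_one hr0.le hr1 (by linarith))).mul_left _
  refine Summable.of_nonneg_of_le (fun n => f_nonneg hr0 _) (fun m => ?_) hq
  refine (f_neg_le hr0 m).trans_eq ?_
  rw [← Real.rpow_natCast (r ^ (2 * (1 - lam))) m, ← Real.rpow_mul hr0.le,
    ← Real.rpow_add hr0]
  congr 1
  ring

lemma summable_int (hr0 : 0 < r) (hr1 : r < 1) (hlam0 : 0 < lam) (hlam1 : lam < 1) :
    Summable (f lam r) :=
  (summable_nat hr0 hr1 hlam0).of_nat_of_neg_add_one (summable_neg hr0 hr1 hlam1)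

lemma tsum_split (hr0 : 0 < r) (hr1 : r < 1) (hlam0 : 0 < lam) (hlam1 : lam < 1) :
    ∑' n : ℤ, f lam r n = (∑' n : ℕ, f lam r n) + ∑' m : ℕ, f lam r (-(m + 1)) :=
  tsum_of_nat_of_neg_add_one (summable_nat hr0 hr1 hlam0) (summable_neg hr0 hr1 hlam1)

set_option maxHeartbeats 1000000 in
/-- Upper bound for the nonnegative part. -/
lemma S1_ub (hr0 : 0 < r) (hr1 : r < 1) (hlam0 : 0 < lam) :
    ∑' n : ℕ, f lam r n ≤ 1 / (1 + r) + r ^ (2 * lam) * (1 - r ^ (2 * lam))⁻¹ := by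
  set q := r ^ (2 * lam) with hq
  have hq0 : 0 ≤ q := rpow_nonneg hr0.le _
  have hq1 : q < 1 := Real.rpow_lt_one hr0.le hr1 (by positivity)
  have hsum := summable_nat (lam := lam) hr0 hr1 hlam0
  rw [Summable.tsum_eq_zero_add hsum, show ((0:ℕ):ℤ) = (0:ℤ) from rfl, f_zero hr0]
  refine add_le_add le_rfl ?_
  have hs2 : Summable fun n : ℕ => q * q ^ n := (summable_geometric_of_lt_one hq0 hq1).mul_left _
  calc ∑' n : ℕ, f lam r ((n + 1 : ℕ) : ℤ)
      ≤ ∑' n : ℕ, q * q ^ n := by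
        refine Summable.tsum_le_tsum (fun n => ?_) ((summable_nat_add_iff 1).mpr hsum) hs2
        have h := f_nat_le (lam := lam) hr0 (n + 1)
        rw [pow_succ, mul_comm (q ^ n) q] at h
        exact h
  _ = q * (1 - q)⁻¹ := by rw [tsum_mul_left, tsum_geometric_of_lt_one hq0 hq1]

/-- Upper bound for the negative part when `lam < 1/2` (strict not needed: `≤`). -/
lemma S2_ub (hr0 : 0 < r) (hr1 : r < 1) (hlam : lam ≤ 1 / 2) (hlam1 : lam < 1) :
    ∑' m : ℕ, f lam r (-(m + 1)) ≤ r ^ (1 - 2 * lam) * (1 - r)⁻¹ := by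
  have hs2 : Summable fun m : ℕ => r ^ (1 - 2 * lam) * r ^ m :=
    (summable_geometric_of_lt_one hr0.le hr1).mul_left _
  calc ∑' m : ℕ, f lam r (-(m + 1)) ≤ ∑' m : ℕ, r ^ (1 - 2 * lam) * r ^ m :=
        Summable.tsum_le_tsum (fun m => f_neg_le' hr0 hr1.le hlam m)
          (summable_neg hr0 hr1 hlam1) hs2
  _ = r ^ (1 - 2 * lam) * (1 - r)⁻¹ := by
        rw [tsum_mul_left, tsum_geometric_of_lt_one hr0.le hr1]


lemma S1_lb (hr0 : 0 < r) (hr1 : r < 1) (hlam0 : 0 < lam) :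
    1 / (1 + r) ≤ ∑' n : ℕ, f lam r n := by
  have h := Summable.le_tsum (summable_nat (lam := lam) hr0 hr1 hlam0) 0 (fun j _ => f_nonneg hr0 _)
  simpa [f_zero hr0] using h

lemma f_neg_one_half (hr0 : 0 < r) : f (1 / 2) r (-1) = 1 / (1 + r) := by
  unfold f
  rw [show (2 * ((-1 : ℤ) : ℝ) * (1 / 2 : ℝ)) = -1 by push_cast; ring, Real.rpow_neg_one,
    show (2 * (-1 : ℤ) + 1) = (-1 : ℤ) by norm_num, zpow_neg_one]
  rw [div_eq_div_iff (by positivity) (by positivity)]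
  have hrne : r ≠ 0 := hr0.ne'
  field_simp
  ring

lemma S2_lb_half (hr0 : 0 < r) (hr1 : r < 1) :
    1 / (1 + r) ≤ ∑' m : ℕ, f (1 / 2) r (-(m + 1)) := by
  have h := Summable.le_tsum (summable_neg (lam := 1 / 2) hr0 hr1 (by norm_num)) 0
    (fun j _ => f_nonneg hr0 _)
  simp only [Nat.cast_zero, zero_add] at h
  rw [f_neg_one_half hr0] at h
  exact h

set_option maxHeartbeats 1000000 in
lemma S2_ub_half (hr0 : 0 < r) (hr1 : r < 1) :
    ∑' m : ℕ, f (1 / 2) r (-(m + 1)) ≤ 1 / (1 + r) + r * (1 - r)⁻¹ := by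
  have hsum := summable_neg (lam := 1 / 2) hr0 hr1 (by norm_num)
  rw [Summable.tsum_eq_zero_add hsum]
  have h0 : f (1 / 2) r (-(((0 : ℕ) : ℤ) + 1)) = 1 / (1 + r) := by
    simpa using f_neg_one_half hr0
  rw [h0]
  refine add_le_add le_rfl ?_
  have hs2 : Summable fun m : ℕ => r * r ^ m :=
    (summable_geometric_of_lt_one hr0.le hr1).mul_left _
  calc ∑' m : ℕ, f (1 / 2) r (-(((m + 1 : ℕ) : ℤ) + 1))
      ≤ ∑' m : ℕ, r * r ^ m := by
        refine Summable.tsum_le_tsum (fun m => ?_) ((summable_nat_add_iff 1).mpr hsum) hs2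
        have h := f_neg_le' (lam := 1 / 2) hr0 hr1.le le_rfl (m + 1)
        rw [show (1 - 2 * (1 / 2 : ℝ)) = 0 by norm_num, Real.rpow_zero, one_mul,
          pow_succ, mul_comm (r ^ m) r] at h
        exact h
  _ = r * (1 - r)⁻¹ := by rw [tsum_mul_left, tsum_geometric_of_lt_one hr0.le hr1]

lemma f_neg_one (hr0 : 0 < r) : f lam r (-1) = r ^ (1 - 2 * lam) / (1 + r) := by
  unfold f
  rw [show (2 * ((-1 : ℤ) : ℝ) * lam) = (1 - 2 * lam) + (-1) by push_cast; ring,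
    Real.rpow_add hr0, Real.rpow_neg_one,
    show (2 * (-1 : ℤ) + 1) = (-1 : ℤ) by norm_num, zpow_neg_one]
  rw [div_eq_div_iff (by positivity) (by positivity)]
  have hrne : r ≠ 0 := hr0.ne'
  field_simp
  ring

/- Tendsto helpers on the filter `𝓝[Ioo 0 1] 0`. -/

lemma tendsto_rpow_zero {c : ℝ} (hc : 0 < c) :
    Tendsto (fun x : ℝ => x ^ c) (𝓝[Set.Ioo (0 : ℝ) 1] 0) (𝓝 0) := by
  have h := (Real.continuousAt_rpow_const 0 c (Or.inr hc.le)).tendsto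
  rw [Real.zero_rpow hc.ne'] at h
  exact h.mono_left nhdsWithin_le_nhds

lemma tendsto_id' : Tendsto (fun x : ℝ => x) (𝓝[Set.Ioo (0 : ℝ) 1] 0) (𝓝 0) :=
  tendsto_id.mono_left nhdsWithin_le_nhds

lemma tendsto_one_div : Tendsto (fun x : ℝ => 1 / (1 + x)) (𝓝[Set.Ioo (0 : ℝ) 1] 0) (𝓝 1) := by
  have h : Tendsto (fun x : ℝ => 1 / (1 + x)) (𝓝[Set.Ioo (0 : ℝ) 1] 0) (𝓝 (1 / (1 + 0))) :=
    Tendsto.div tendsto_const_nhds (tendsto_const_nhds.add tendsto_id') (by norm_num)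
  simpa using h

lemma tendsto_aux {c : ℝ} (hc : 0 < c) :
    Tendsto (fun x : ℝ => x ^ c * (1 - x ^ c)⁻¹) (𝓝[Set.Ioo (0 : ℝ) 1] 0) (𝓝 0) := by
  have h1 : Tendsto (fun x : ℝ => (1 - x ^ c)⁻¹) (𝓝[Set.Ioo (0 : ℝ) 1] 0)
      (𝓝 ((1 - 0 : ℝ)⁻¹)) :=
    (tendsto_const_nhds.sub (tendsto_rpow_zero hc)).inv₀ (by norm_num)
  have h := (tendsto_rpow_zero hc).mul h1
  simpa using h

lemma tendsto_aux2 {c : ℝ} (hc : 0 < c) :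
    Tendsto (fun x : ℝ => x ^ c * (1 - x)⁻¹) (𝓝[Set.Ioo (0 : ℝ) 1] 0) (𝓝 0) := by
  have h1 : Tendsto (fun x : ℝ => (1 - x)⁻¹) (𝓝[Set.Ioo (0 : ℝ) 1] 0)
      (𝓝 ((1 - 0 : ℝ)⁻¹)) :=
    (tendsto_const_nhds.sub tendsto_id').inv₀ (by norm_num)
  have h := (tendsto_rpow_zero hc).mul h1
  simpa using h

lemma tendsto_aux3 : Tendsto (fun x : ℝ => x * (1 - x)⁻¹) (𝓝[Set.Ioo (0 : ℝ) 1] 0) (𝓝 0) := by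
  have h1 : Tendsto (fun x : ℝ => (1 - x)⁻¹) (𝓝[Set.Ioo (0 : ℝ) 1] 0)
      (𝓝 ((1 - 0 : ℝ)⁻¹)) :=
    (tendsto_const_nhds.sub tendsto_id').inv₀ (by norm_num)
  have h := tendsto_id'.mul h1
  simpa using h

end Stmt7Aux

open Stmt7Aux Real in
set_option maxHeartbeats 1000000 in
/-- With `F(r) = ∑_{n∈ℤ} r^{2nλ}/(1 + r^{2n+1}) = 2π S_r(r^λ) = c_{A_r}(r^λ)` (a
convergent series), as `r → 0⁺`: `F(r) → 1` if `λ < 1/2`, `F(r) → 2` if `λ = 1/2`, and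
`F(r) → +∞` if `λ > 1/2`. -/
theorem stmt7 (lam : ℝ) (hlam : lam ∈ Set.Ioo (0 : ℝ) 1) :
    (∀ r ∈ Set.Ioo (0 : ℝ) 1,
      Summable (fun n : ℤ => r ^ (2 * (n : ℝ) * lam) / (1 + r ^ (2 * n + 1)))) ∧
    (lam < 1 / 2 →
      Tendsto (fun r : ℝ => ∑' n : ℤ, r ^ (2 * (n : ℝ) * lam) / (1 + r ^ (2 * n + 1)))
        (𝓝[Set.Ioo (0 : ℝ) 1] 0) (𝓝 1)) ∧
    (lam = 1 / 2 →
      Tendsto (fun r : ℝ => ∑' n : ℤ, r ^ (2 * (n : ℝ) * lam) / (1 + r ^ (2 * n + 1)))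
        (𝓝[Set.Ioo (0 : ℝ) 1] 0) (𝓝 2)) ∧
    (1 / 2 < lam →
      Tendsto (fun r : ℝ => ∑' n : ℤ, r ^ (2 * (n : ℝ) * lam) / (1 + r ^ (2 * n + 1)))
        (𝓝[Set.Ioo (0 : ℝ) 1] 0) atTop) := by
  obtain ⟨hl0, hl1⟩ := hlam
  have hmem : ∀ᶠ x in 𝓝[Set.Ioo (0 : ℝ) 1] (0 : ℝ), x ∈ Set.Ioo (0 : ℝ) 1 :=
    eventually_mem_nhdsWithin
  refine ⟨fun r hr => summable_int hr.1 hr.2 hl0 hl1, ?_, ?_, ?_⟩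
  · -- lam < 1/2
    intro h
    have hce : (0 : ℝ) < 1 - 2 * lam := by linarith
    have hc2 : (0 : ℝ) < 2 * lam := by linarith
    have tup : Tendsto
        (fun x : ℝ => 1 / (1 + x) + x ^ (2 * lam) * (1 - x ^ (2 * lam))⁻¹
          + x ^ (1 - 2 * lam) * (1 - x)⁻¹) (𝓝[Set.Ioo (0 : ℝ) 1] 0) (𝓝 1) := by
      have := (tendsto_one_div.add (tendsto_aux hc2)).add (tendsto_aux2 hce)
      simpa using this
    refine tendsto_of_tendsto_of_tendsto_of_le_of_le' tendsto_one_div tup ?_ ?_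
    · filter_upwards [hmem] with r hr
      have h0 := Summable.le_tsum (summable_int hr.1 hr.2 hl0 hl1) 0 (fun j _ => f_nonneg hr.1 _)
      rw [f_zero hr.1] at h0
      exact h0
    · filter_upwards [hmem] with r hr
      rw [show (∑' n : ℤ, r ^ (2 * (n : ℝ) * lam) / (1 + r ^ (2 * n + 1)))
          = ∑' n : ℤ, f lam r n from rfl, tsum_split hr.1 hr.2 hl0 hl1]
      exact add_le_add (S1_ub hr.1 hr.2 hl0) (S2_ub hr.1 hr.2 h.le hl1)
  · -- lam = 1/2
    intro h
    subst h
    have tlow : Tendsto (fun x : ℝ => 1 / (1 + x) + 1 / (1 + x))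
        (𝓝[Set.Ioo (0 : ℝ) 1] 0) (𝓝 2) := by
      have := tendsto_one_div.add tendsto_one_div
      convert this using 2
      norm_num
    have tup : Tendsto
        (fun x : ℝ => (1 / (1 + x) + x ^ (2 * (1 / 2 : ℝ)) * (1 - x ^ (2 * (1 / 2 : ℝ)))⁻¹)
          + (1 / (1 + x) + x * (1 - x)⁻¹)) (𝓝[Set.Ioo (0 : ℝ) 1] 0) (𝓝 2) := by
      have := (tendsto_one_div.add (tendsto_aux (show (0:ℝ) < 2 * (1/2) by norm_num))).add
        (tendsto_one_div.add tendsto_aux3)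
      convert this using 2
      norm_num
    refine tendsto_of_tendsto_of_tendsto_of_le_of_le' tlow tup ?_ ?_
    · filter_upwards [hmem] with r hr
      rw [show (∑' n : ℤ, r ^ (2 * (n : ℝ) * (1/2 : ℝ)) / (1 + r ^ (2 * n + 1)))
          = ∑' n : ℤ, f (1/2) r n from rfl,
        tsum_split hr.1 hr.2 (by norm_num) (by norm_num)]
      exact add_le_add (S1_lb hr.1 hr.2 (by norm_num)) (S2_lb_half hr.1 hr.2)
    · filter_upwards [hmem] with r hr
      rw [show (∑' n : ℤ, r ^ (2 * (n : ℝ) * (1/2 : ℝ)) / (1 + r ^ (2 * n + 1)))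
          = ∑' n : ℤ, f (1/2) r n from rfl,
        tsum_split hr.1 hr.2 (by norm_num) (by norm_num)]
      exact add_le_add (S1_ub hr.1 hr.2 (by norm_num)) (S2_ub_half hr.1 hr.2)
  · -- lam > 1/2
    intro h
    have hc : (0 : ℝ) < 2 * lam - 1 := by linarith
    have h1 : Tendsto (fun x : ℝ => x ^ (2 * lam - 1)) (𝓝[Set.Ioo (0 : ℝ) 1] 0) (𝓝[>] 0) := by
      rw [tendsto_nhdsWithin_iff]
      exact ⟨tendsto_rpow_zero hc, hmem.mono fun x hx => Real.rpow_pos_of_pos hx.1 _⟩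
    have h2 : Tendsto (fun x : ℝ => (x ^ (2 * lam - 1))⁻¹) (𝓝[Set.Ioo (0 : ℝ) 1] 0) atTop :=
      h1.inv_tendsto_nhdsGT_zero
    have h3 : Tendsto (fun x : ℝ => x ^ (1 - 2 * lam) / 2) (𝓝[Set.Ioo (0 : ℝ) 1] 0) atTop := by
      refine Tendsto.atTop_div_const two_pos (Tendsto.congr' ?_ h2)
      filter_upwards [hmem] with x hx
      rw [← Real.rpow_neg hx.1.le]
      congr 1
      ring
    refine tendsto_atTop_mono' _ ?_ h3
    filter_upwards [hmem] with r hr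
    have h4 := Summable.le_tsum (summable_int hr.1 hr.2 hl0 hl1) (-1) (fun j _ => f_nonneg hr.1 _)
    rw [f_neg_one hr.1] at h4
    refine le_trans ?_ h4
    gcongr
    · exact Real.rpow_nonneg hr.1.le _
    · linarith [hr.1]
    · linarith [hr.2]
end

section
/- Let Ω ⊂ ℂ be a bounded C^∞-smoothly bounded domain. Then the area of Ω with respect to the Carathéodory metric is infinite: ∫_Ω c_Ω(z)² dA(z) = +∞, where dA is Lebesgue area measure on ℂ ≅ ℝ². -/
open Filter Topology MeasureTheory

/-- The Carathéodory metric density of a domain `Ω ⊆ ℂ`: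
`c_Ω(z) = sup{ |f′(z)| : f : Ω → 𝔻 holomorphic, f(z) = 0 }`. -/
noncomputable def carath (Ω : Set ℂ) (z : ℂ) : ℝ :=
  sSup {x : ℝ | ∃ f : ℂ → ℂ, DifferentiableOn ℂ f Ω ∧
    Set.MapsTo f Ω (Metric.ball (0 : ℂ) 1) ∧ f z = 0 ∧ x = ‖deriv f z‖}

/-- A bounded `C^∞`-smoothly bounded domain in `ℂ`: open, connected, bounded, and cut out
as `{ψ < 0}` by a `C^∞` function `ψ` with nonvanishing gradient on the boundary. -/
def IsSmoothlyBoundedDomain (Ω : Set ℂ) : Prop :=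
  IsOpen Ω ∧ IsConnected Ω ∧ Bornology.IsBounded Ω ∧
    ∃ ψ : ℂ → ℝ, ContDiff ℝ (⊤ : ℕ∞) ψ ∧ Ω = {z : ℂ | ψ z < 0} ∧
      ∀ z ∈ frontier Ω, fderiv ℝ ψ z ≠ 0

/-- Compatibility: the complex absolute value, as an `AbsoluteValue`. -/
noncomputable def Complex.abs : AbsoluteValue ℂ ℝ := NormedField.toAbsoluteValue ℂ

lemma Complex.norm_eq_abs (z : ℂ) : ‖z‖ = Complex.abs z := rfl

lemma Complex.sq_abs (z : ℂ) : Complex.abs z ^ 2 = Complex.normSq z := Complex.sq_norm z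

lemma Complex.abs_ofReal (x : ℝ) : Complex.abs (x : ℂ) = |x| := Complex.norm_real x

@[simp]
lemma Complex.abs_conj (z : ℂ) : Complex.abs ((starRingEnd ℂ) z) = Complex.abs z := Complex.norm_conj z

lemma Complex.continuous_abs : Continuous Complex.abs := continuous_norm

open Metric Set Complex
open scoped ENNReal NNReal

lemma moeb_normSq (c x : ℂ) :
    normSq (1 - (starRingEnd ℂ) c * x) - normSq (x - c)
      = (1 - normSq c) * (1 - normSq x) := by
  simp [Complex.normSq_apply, Complex.sub_re, Complex.sub_im, Complex.mul_re, Complex.mul_im,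
    Complex.one_re, Complex.one_im]
  ring

lemma moeb_den_ne (c x : ℂ) (hc : Complex.abs c < 1) (hx : Complex.abs x < 1) :
    (1 : ℂ) - (starRingEnd ℂ) c * x ≠ 0 := by
  intro h
  have h1 : (starRingEnd ℂ) c * x = 1 := by linear_combination -h
  have := congrArg Complex.abs h1
  simp [map_mul] at this
  nlinarith [Complex.abs.nonneg c, Complex.abs.nonneg x]

lemma moeb_lt_one (c x : ℂ) (hc : Complex.abs c < 1) (hx : Complex.abs x < 1) :
    Complex.abs ((x - c) / (1 - (starRingEnd ℂ) c * x)) < 1 := by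
  have hden := moeb_den_ne c x hc hx
  rw [map_div₀, div_lt_one (Complex.abs.pos hden)]
  have hnc : normSq c < 1 := by rw [← Complex.sq_abs] at *; nlinarith [Complex.abs.nonneg c]
  have hnx : normSq x < 1 := by rw [← Complex.sq_abs] at *; nlinarith [Complex.abs.nonneg x]
  have key := moeb_normSq c x
  have h2 : normSq (x - c) < normSq (1 - (starRingEnd ℂ) c * x) := by nlinarith
  have := Complex.sq_abs (x - c)
  have := Complex.sq_abs (1 - (starRingEnd ℂ) c * x)
  exact lt_of_pow_lt_pow_left₀ 2 (Complex.abs.nonneg _) (by nlinarith)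

lemma carath_bddAbove {Ω : Set ℂ} (hΩ : IsOpen Ω) {w : ℂ} (hw : w ∈ Ω) :
    BddAbove {x : ℝ | ∃ f : ℂ → ℂ, DifferentiableOn ℂ f Ω ∧
      Set.MapsTo f Ω (Metric.ball (0 : ℂ) 1) ∧ f w = 0 ∧ x = Complex.abs (deriv f w)} := by
  obtain ⟨d, hd, hball⟩ := Metric.isOpen_iff.mp hΩ w hw
  refine ⟨2 / d, ?_⟩
  rintro x ⟨f, hdf, hmaps, hfw, rfl⟩
  have hm : Set.MapsTo f (Metric.ball w d) (Metric.ball (f w) 2) := by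
    intro z hz
    have := hmaps (hball hz)
    rw [Metric.mem_ball] at this ⊢
    rw [hfw]
    calc dist (f z) 0 < 1 := this
    _ < 2 := by norm_num
  have := Complex.norm_deriv_le_div_of_mapsTo_ball (hdf.mono hball) (hm.mono_right Metric.ball_subset_closedBall) hd
  exact this

lemma normSq_sub_smul (v u : ℂ) (σ : ℝ) :
    normSq (v - σ • u) = normSq v - 2*σ*((starRingEnd ℂ) u * v).re + σ^2 * normSq u := by
  simp [Complex.normSq_apply, Complex.sub_re, Complex.sub_im, Complex.mul_re, Complex.mul_im,
    Complex.smul_re, Complex.smul_im]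
  ring

set_option maxHeartbeats 2000000 in
lemma boundary_geometry {Ω : Set ℂ} (hΩ : IsSmoothlyBoundedDomain Ω) :
    ∃ (p a : ℂ) (r : ℝ) (v₀ : ℂ) (ε δ : ℝ), 0 < r ∧ Complex.abs (p - a) = r ∧
      (∀ z ∈ Ω, r < Complex.abs (z - a)) ∧ 0 < ε ∧ 0 < δ ∧ δ ≤ 1 ∧
      (∀ v ∈ Metric.ball v₀ ε, 1/2 < Complex.abs v ∧ Complex.abs v < 1) ∧
      (∀ (σ : ℝ) (v : ℂ), 0 < σ → σ ≤ δ → v ∈ Metric.ball v₀ ε → p + σ • v ∈ Ω) := by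
  obtain ⟨hopen, hconn, hbdd, ψ, hψ, hΩψ, hgrad⟩ := hΩ
  have hne : Ω.Nonempty := hconn.nonempty
  -- frontier is nonempty
  have hfr : (frontier Ω).Nonempty := by
    by_contra h
    rw [Set.not_nonempty_iff_eq_empty] at h
    have hclopen : IsClopen Ω := isClopen_iff_frontier_eq_empty.mpr h
    rcases isClopen_iff.mp hclopen with h1 | h1
    · rw [h1] at hne; exact Set.not_nonempty_empty hne
    · obtain ⟨R, hR⟩ := hbdd.subset_closedBall 0
      have := hR (by rw [h1]; trivial : ((|R| + 1 : ℝ) : ℂ) ∈ Ω)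
      rw [Metric.mem_closedBall, dist_zero_right] at this
      simp only [Complex.norm_real, Real.norm_eq_abs] at this
      have h2 : |R| + 1 ≤ |(|R| + 1)| := le_abs_self _
      have h3 : R ≤ |R| := le_abs_self R
      linarith [_root_.abs_abs R ▸ this]
  obtain ⟨p, hp⟩ := hfr
  have hpΩ : p ∉ Ω := by
    rw [hopen.frontier_eq] at hp
    exact hp.2
  have hψp_ge : 0 ≤ ψ p := by
    by_contra h
    exact hpΩ (by rw [hΩψ]; exact lt_of_not_ge h)
  have hψp_le : ψ p ≤ 0 := by
    have hsub : closure Ω ⊆ {z : ℂ | ψ z ≤ 0} := by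
      apply closure_minimal
      · rw [hΩψ]; intro z hz; exact le_of_lt (Set.mem_setOf_eq ▸ hz)
      · exact isClosed_le hψ.continuous continuous_const
    exact hsub (frontier_subset_closure hp)
  have hψp : ψ p = 0 := le_antisymm hψp_le hψp_ge
  set L := fderiv ℝ ψ p with hLdef
  have hL : L ≠ 0 := hgrad p hp
  -- Lipschitz bound on fderiv near p
  have hψ' : ContDiff ℝ 1 (fderiv ℝ ψ) := hψ.fderiv_right (by norm_cast)
  obtain ⟨K₀, tset, htset, hlip⟩ := hψ'.contDiffAt.exists_lipschitzOnWith
  obtain ⟨ρ₀, hρ₀, hballt⟩ := Metric.mem_nhds_iff.mp htset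
  set Kr : ℝ := (K₀ : ℝ) + 1 with hKrdef
  have hKr : 0 < Kr := by positivity
  set ρ := ρ₀ / 2 with hρdef
  have hρ : 0 < ρ := by positivity
  have hsubt : Metric.closedBall p ρ ⊆ tset :=
    subset_trans (Metric.closedBall_subset_ball (by rw [hρdef]; linarith)) hballt
  -- Taylor estimate
  have htay : ∀ v : ℂ, ‖v‖ ≤ ρ → |ψ (p + v) - L v| ≤ Kr * ‖v‖^2 := by
    intro v hv
    rcases eq_or_ne v 0 with rfl | hv0
    · simp [hψp]
    · have hvpos : 0 < ‖v‖ := norm_pos_iff.mpr hv0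
      have hconv : Convex ℝ (Metric.closedBall p ‖v‖) := convex_closedBall _ _
      have hsub2 : Metric.closedBall p ‖v‖ ⊆ tset :=
        subset_trans (Metric.closedBall_subset_closedBall hv) hsubt
      have hder : ∀ x ∈ Metric.closedBall p ‖v‖,
          HasFDerivWithinAt ψ (fderiv ℝ ψ x) (Metric.closedBall p ‖v‖) x :=
        fun x _ => (hψ.differentiable (by simp) x).hasFDerivAt.hasFDerivWithinAt
      have hbound : ∀ x ∈ Metric.closedBall p ‖v‖, ‖fderiv ℝ ψ x - L‖ ≤ Kr * ‖v‖ := by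
        intro x hx
        have h5 := hlip.dist_le_mul x (hsub2 hx) p (hsubt (Metric.mem_closedBall_self hρ.le))
        rw [dist_eq_norm] at h5
        have h6 : dist x p ≤ ‖v‖ := Metric.mem_closedBall.mp hx
        have h7 : (K₀ : ℝ) ≥ 0 := K₀.coe_nonneg
        calc ‖fderiv ℝ ψ x - L‖ ≤ K₀ * dist x p := h5
        _ ≤ Kr * ‖v‖ := by
          apply mul_le_mul (by rw [hKrdef]; linarith) h6 dist_nonneg hKr.le
      have hpv : p + v ∈ Metric.closedBall p ‖v‖ := by
        rw [Metric.mem_closedBall, dist_eq_norm]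
        simp
      have hmvt := hconv.norm_image_sub_le_of_norm_hasFDerivWithin_le' hder hbound
        (Metric.mem_closedBall_self (norm_nonneg v)) hpv
      rw [hψp] at hmvt
      simp only [add_sub_cancel_left, sub_zero] at hmvt
      rw [Real.norm_eq_abs] at hmvt
      calc |ψ (p + v) - L v| ≤ Kr * ‖v‖ * ‖v‖ := hmvt
      _ = Kr * ‖v‖^2 := by ring
  -- representation of L by a complex number u
  set u : ℂ := (Complex.ofReal (L 1)) + (Complex.ofReal (L Complex.I)) * Complex.I with hudef
  have hLrep : ∀ v : ℂ, L v = ((starRingEnd ℂ) u * v).re := by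
    intro v
    have hv : v = v.re • (1:ℂ) + v.im • Complex.I := by
      apply Complex.ext <;> simp [Complex.smul_re, Complex.smul_im]
    conv_lhs => rw [hv]
    rw [map_add, L.map_smul, L.map_smul]
    simp only [smul_eq_mul, hudef, Complex.mul_re, Complex.add_re, Complex.add_im,
      Complex.conj_re, Complex.conj_im, Complex.ofReal_re, Complex.ofReal_im,
      Complex.mul_im, Complex.I_re, Complex.I_im]
    ring
  have hu : u ≠ 0 := by
    intro h
    apply hL
    apply ContinuousLinearMap.ext
    intro v
    rw [ContinuousLinearMap.zero_apply, hLrep v, h]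
    simp
  set M := Complex.abs u with hMdef
  have hM : 0 < M := Complex.abs.pos hu
  have hLu : L u = M^2 := by
    rw [hLrep]
    rw [show (starRingEnd ℂ) u * u = ((normSq u : ℝ) : ℂ) from by rw [mul_comm, Complex.mul_conj]]
    rw [Complex.ofReal_re, hMdef, ← Complex.sq_abs]
  have hLsmul : ∀ (σ : ℝ) (v : ℂ), L (σ • v) = σ * L v := fun σ v => by
    rw [L.map_smul]; simp
  -- exterior ball
  set r' : ℝ := min (1/(2*Kr)) (ρ/(2*M)) with hr'def
  have hr' : 0 < r' := lt_min (by positivity) (by positivity)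
  have hr'K : r' ≤ 1/(2*Kr) := min_le_left _ _
  have hr'ρ : r' ≤ ρ/(2*M) := min_le_right _ _
  set r : ℝ := r' * M with hrdef
  have hr : 0 < r := by positivity
  set a : ℂ := p + r' • u with hadef
  have hpa : Complex.abs (p - a) = r := by
    rw [hadef, show p - (p + r' • u) = -(r' • u) by ring]
    rw [map_neg_eq_map]
    rw [show Complex.abs (r' • u) = ‖r' • u‖ from rfl, norm_smul]
    simp [Real.norm_eq_abs, abs_of_pos hr', hrdef, ← hMdef, Complex.norm_eq_abs]
  have hdisj : ∀ z ∈ Ω, r < Complex.abs (z - a) := by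
    intro z hz
    by_contra hle
    push_neg at hle
    set v := z - p with hvdef
    have hv1 : v - r' • u = z - a := by rw [hvdef, hadef]; ring
    have hnsq : normSq (z - a) ≤ r^2 := by
      rw [← Complex.sq_abs]
      exact pow_le_pow_left₀ (Complex.abs.nonneg _) hle 2
    rw [← hv1, normSq_sub_smul] at hnsq
    have hLv : normSq v ≤ 2 * r' * L v := by
      rw [hLrep]
      have h7 : normSq u = M^2 := by rw [hMdef, ← Complex.sq_abs]
      have hr2 : r^2 = r'^2 * M^2 := by rw [hrdef]; ring
      have h7' : r'^2 * normSq u = r^2 := by rw [h7, hr2]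
      linarith [hnsq, h7']
    have hLvpos : 0 ≤ L v := by
      by_contra hneg
      push_neg at hneg
      nlinarith [Complex.normSq_nonneg v, mul_pos hr' (neg_pos.mpr hneg)]
    have hvnorm : ‖v‖ ≤ ρ := by
      have h8 : ‖v‖ ≤ ‖v - r' • u‖ + ‖r' • u‖ := by
        calc ‖v‖ = ‖(v - r' • u) + r' • u‖ := by rw [sub_add_cancel]
        _ ≤ _ := norm_add_le _ _
      have h9 : ‖v - r' • u‖ ≤ r := by rw [hv1]; exact hle
      have h10 : ‖r' • u‖ = r := by
        rw [norm_smul]; simp [Real.norm_eq_abs, abs_of_pos hr', hrdef, Complex.norm_eq_abs, ← hMdef]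
      have h11 : 2 * r' * M ≤ ρ := by
        have h := (le_div_iff₀ (by positivity : (0:ℝ) < 2*M)).mp hr'ρ
        linarith
      rw [hrdef] at h9 h10
      linarith
    have htay2 := htay v hvnorm
    have hψz : 0 ≤ ψ (p + v) := by
      have h12 : ψ (p + v) ≥ L v - Kr * ‖v‖^2 := by
        have := abs_le.mp htay2
        linarith [this.1]
      have h13 : ‖v‖^2 = normSq v := by
        rw [show ‖v‖ = Complex.abs v from rfl, Complex.sq_abs]
      have h14 : 2 * Kr * r' ≤ 1 := by
        have h := (le_div_iff₀ (by positivity : (0:ℝ) < 2*Kr)).mp hr'K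
        linarith
      have e1 : Kr * normSq v ≤ Kr * (2*r'*L v) := mul_le_mul_of_nonneg_left hLv hKr.le
      have e2 : Kr*(2*r'*L v) = (2*Kr*r')*L v := by ring
      have e3 : (2*Kr*r')*L v ≤ 1*L v := mul_le_mul_of_nonneg_right h14 hLvpos
      rw [h13] at h12
      linarith [e1, e2, e3, h12]
    rw [show p + v = z by rw [hvdef]; ring] at hψz
    rw [hΩψ] at hz
    exact absurd hz (not_lt.mpr hψz)
  -- interior cone
  set v₀ : ℂ := (-(3/(4*M)) : ℝ) • u with hv₀def
  have hv₀abs : Complex.abs v₀ = 3/4 := by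
    rw [hv₀def, show Complex.abs ((-(3/(4*M)) : ℝ) • u) = ‖(-(3/(4*M)) : ℝ) • u‖ from rfl,
      norm_smul]
    rw [Real.norm_eq_abs, abs_neg, abs_of_pos (by positivity)]
    rw [Complex.norm_eq_abs, ← hMdef]
    field_simp
  have hLv₀ : L v₀ = -(3/4)*M := by
    rw [hv₀def, hLsmul, hLu]
    field_simp
  set S : Set ℂ := {v : ℂ | L v < -(M/2) * Complex.abs v} with hSdef
  have hS : IsOpen S := by
    apply isOpen_lt (L.continuous)
    exact continuous_const.mul Complex.continuous_abs
  have hv₀S : v₀ ∈ S := by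
    rw [hSdef, Set.mem_setOf_eq, hLv₀, hv₀abs]
    linarith
  obtain ⟨ε₀, hε₀pos, hballS⟩ := Metric.isOpen_iff.mp hS v₀ hv₀S
  set ε : ℝ := min ε₀ (1/8) with hεdef
  have hε : 0 < ε := lt_min hε₀pos (by norm_num)
  have hεS : Metric.ball v₀ ε ⊆ S :=
    subset_trans (Metric.ball_subset_ball (min_le_left _ _)) hballS
  have hε8 : ε ≤ 1/8 := min_le_right _ _
  have hannulus : ∀ v ∈ Metric.ball v₀ ε, 1/2 < Complex.abs v ∧ Complex.abs v < 1 := by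
    intro v hv
    rw [Metric.mem_ball, Complex.dist_eq] at hv
    have h15 : Complex.abs (v - v₀) < 1/8 := lt_of_lt_of_le hv hε8
    have h16 : Complex.abs v₀ ≤ Complex.abs v + Complex.abs (v₀ - v) := by
      calc Complex.abs v₀ = Complex.abs (v + (v₀ - v)) := by rw [add_sub_cancel]
      _ ≤ _ := Complex.abs.add_le _ _
    have h17 : Complex.abs v ≤ Complex.abs v₀ + Complex.abs (v - v₀) := by
      calc Complex.abs v = Complex.abs (v₀ + (v - v₀)) := by rw [add_sub_cancel]
      _ ≤ _ := Complex.abs.add_le _ _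
    rw [hv₀abs] at h16 h17
    rw [show v₀ - v = -(v - v₀) by ring, map_neg_eq_map] at h16
    constructor <;> linarith
  -- δ
  set δ : ℝ := min (min ρ (M/(2*Kr))) 1 with hδdef
  have hδ : 0 < δ := lt_min (lt_min hρ (by positivity)) one_pos
  have hδρ : δ ≤ ρ := le_trans (min_le_left _ _) (min_le_left _ _)
  have hδM : δ ≤ M/(2*Kr) := le_trans (min_le_left _ _) (min_le_right _ _)
  have hδ1 : δ ≤ 1 := min_le_right _ _
  have hcone : ∀ (σ : ℝ) (v : ℂ), 0 < σ → σ ≤ δ → v ∈ Metric.ball v₀ ε → p + σ • v ∈ Ω := by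
    intro σ v hσ hσδ hv
    have hvS := hεS hv
    rw [hSdef, Set.mem_setOf_eq] at hvS
    obtain ⟨hv12, hv1⟩ := hannulus v hv
    have hvabs : 0 < Complex.abs v := by linarith
    have hnorm : ‖σ • v‖ = σ * Complex.abs v := by
      rw [norm_smul, Real.norm_eq_abs, abs_of_pos hσ]; rfl
    have hnormle : ‖σ • v‖ ≤ ρ := by
      rw [hnorm]
      have := mul_le_mul_of_nonneg_left hv1.le hσ.le
      have h21 : σ * 1 = σ := mul_one σ
      linarith
    have htay3 := htay (σ • v) hnormle
    have h18 : ψ (p + σ • v) ≤ L (σ • v) + Kr * ‖σ • v‖^2 := by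
      have := abs_le.mp htay3
      linarith [this.2]
    have h19 : L (σ • v) = σ * L v := hLsmul σ v
    have h20 : Kr * σ ≤ M/2 := by
      have := hδM
      rw [le_div_iff₀ (by positivity : (0:ℝ) < 2*Kr)] at this
      have h22 := mul_le_mul_of_nonneg_left hσδ hKr.le
      clear_value Kr δ
      linarith
    have hψneg : ψ (p + σ • v) < 0 := by
      rw [h19] at h18
      rw [hnorm] at h18
      set B := Complex.abs v with hBdef
      have c1 : σ * L v < σ * (-(M/2) * B) := mul_lt_mul_of_pos_left hvS hσ
      have c2 : Kr * (σ*B)^2 = (Kr*σ)*(σ*B^2) := by ring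
      have c3 : (Kr*σ)*(σ*B^2) ≤ (M/2)*(σ*B^2) :=
        mul_le_mul_of_nonneg_right h20 (by positivity)
      have c5 : σ*B^2 < σ*B := by
        have := mul_lt_mul_of_pos_left hv1 (mul_pos hσ hvabs)
        have hr1 : (σ*B)*B = σ*B^2 := by ring
        have hr2 : (σ*B)*1 = σ*B := by ring
        rw [hr1, hr2] at this
        exact this
      have c4 : (M/2)*(σ*B^2) < (M/2)*(σ*B) := mul_lt_mul_of_pos_left c5 (by positivity)
      have c6 : σ * (-(M/2) * B) = -((M/2)*(σ*B)) := by ring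
      clear_value Kr M B
      linarith
    rw [hΩψ]
    exact hψneg
  exact ⟨p, a, r, v₀, ε, δ, hr, hpa, hdisj, hε, hδ, hδ1, hannulus, hcone⟩

lemma carath_ge {Ω : Set ℂ} (hΩ : IsOpen Ω) {p a : ℂ} {r : ℝ} (hr : 0 < r)
    (hpa : Complex.abs (p - a) = r) (hdisj : ∀ z ∈ Ω, r < Complex.abs (z - a))
    {w : ℂ} (hw : w ∈ Ω) {s : ℝ} (hs : 0 < s) (hws : Complex.abs (w - p) ≤ s) :
    r / (s * (s + 2*r)) ≤ carath Ω w := by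
  set t := Complex.abs (w - a) with htdef
  have ht : r < t := hdisj w hw
  have ht0 : 0 < t := hr.trans ht
  have hts : t ≤ s + r := by
    calc t = Complex.abs ((w - p) + (p - a)) := by rw [htdef]; ring_nf
    _ ≤ Complex.abs (w - p) + Complex.abs (p - a) := Complex.abs.add_le _ _
    _ ≤ s + r := by rw [hpa]; exact add_le_add_left hws r
  have hwa : w - a ≠ 0 := by
    intro h; rw [htdef, h] at ht0; simp at ht0
  set f : ℂ → ℂ := fun ζ => (r:ℂ) * (ζ - a)⁻¹ with hfdef
  have habsf : ∀ ζ : ℂ, Complex.abs (f ζ) = r / Complex.abs (ζ - a) := by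
    intro ζ
    simp [hfdef, map_mul, map_inv₀, Complex.abs_ofReal, abs_of_pos hr, div_eq_mul_inv]
  have hfΩlt : ∀ z ∈ Ω, Complex.abs (f z) < 1 := by
    intro z hz
    rw [habsf, div_lt_one (hr.trans (hdisj z hz))]
    exact hdisj z hz
  have hzane : ∀ z ∈ Ω, z - a ≠ 0 := by
    intro z hz h
    have := hdisj z hz
    rw [h] at this; simp at this; linarith
  have hdfΩ : DifferentiableOn ℂ f Ω := by
    apply DifferentiableOn.const_mul
    exact DifferentiableOn.inv ((differentiableOn_id.sub_const a)) hzane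
  set c : ℂ := f w with hcdef
  have habsc : Complex.abs c = r / t := habsf w
  have hc1 : Complex.abs c < 1 := hfΩlt w hw
  set g : ℂ → ℂ := fun ζ => (f ζ - c) / (1 - (starRingEnd ℂ) c * f ζ) with hgdef
  have hdden : ∀ z ∈ Ω, (1 : ℂ) - (starRingEnd ℂ) c * f z ≠ 0 :=
    fun z hz => moeb_den_ne c (f z) hc1 (hfΩlt z hz)
  have hgd : DifferentiableOn ℂ g Ω :=
    (hdfΩ.sub_const c).div ((hdfΩ.const_mul _).const_sub 1) hdden
  have hgm : Set.MapsTo g Ω (Metric.ball (0:ℂ) 1) := by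
    intro z hz
    rw [Metric.mem_ball, dist_zero_right]
    exact moeb_lt_one c (f z) hc1 (hfΩlt z hz)
  have hgw : g w = 0 := by simp [hgdef, hcdef]
  -- derivative computation
  have h1 : HasDerivAt (fun ζ : ℂ => ζ - a) 1 w := (hasDerivAt_id w).sub_const a
  have h2 : HasDerivAt (fun ζ : ℂ => (ζ - a)⁻¹) (-1 / (w - a)^2) w := h1.inv hwa
  have hf' : HasDerivAt f ((r:ℂ) * (-1 / (w - a)^2)) w := h2.const_mul (r:ℂ)
  set f'w : ℂ := (r:ℂ) * (-1 / (w - a)^2) with hf'wdef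
  have hnum : HasDerivAt (fun ζ => f ζ - c) f'w w := hf'.sub_const c
  have hden : HasDerivAt (fun ζ => (1:ℂ) - (starRingEnd ℂ) c * f ζ)
      (-((starRingEnd ℂ) c * f'w)) w := (hf'.const_mul ((starRingEnd ℂ) c)).const_sub 1
  have hdenw : (1:ℂ) - (starRingEnd ℂ) c * f w ≠ 0 := hdden w hw
  have hg' := hnum.div hden hdenw
  have hDval : deriv g w = f'w / (1 - (starRingEnd ℂ) c * c) := by
    rw [show deriv g w = _ from hg'.deriv]
    rw [show f w - c = 0 from sub_self c]
    rw [← hcdef]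
    have hdenc : (1:ℂ) - (starRingEnd ℂ) c * c ≠ 0 := hdenw
    field_simp
    ring
  have h3 : (starRingEnd ℂ) c * c = ((normSq c : ℝ) : ℂ) := by
    rw [mul_comm, Complex.mul_conj]
  have hnsq : normSq c = (r/t)^2 := by rw [← Complex.sq_abs, habsc]
  have hltc : (r/t)^2 < 1 := by rw [← hnsq, ← Complex.sq_abs]; nlinarith [Complex.abs.nonneg c]
  have habsD : Complex.abs ((1:ℂ) - (starRingEnd ℂ) c * c) = 1 - (r/t)^2 := by
    rw [h3, hnsq, show (1:ℂ) - (((r/t)^2 : ℝ):ℂ) = (((1 - (r/t)^2 : ℝ)):ℂ) by push_cast; ring,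
      Complex.abs_ofReal, _root_.abs_of_nonneg (by linarith)]
  have habsf' : Complex.abs f'w = r / t^2 := by
    rw [hf'wdef]
    simp [map_mul, map_div₀, Complex.abs_ofReal, abs_of_pos hr, map_pow, ← htdef,
      div_eq_mul_inv]
  have hx0 : Complex.abs (deriv g w) = (r / t^2) / (1 - (r/t)^2) := by
    rw [hDval, map_div₀, habsf', habsD]
  have hmem : Complex.abs (deriv g w) ∈ {x : ℝ | ∃ f : ℂ → ℂ, DifferentiableOn ℂ f Ω ∧
      Set.MapsTo f Ω (Metric.ball (0 : ℂ) 1) ∧ f w = 0 ∧ x = Complex.abs (deriv f w)} :=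
    ⟨g, hgd, hgm, hgw, rfl⟩
  have hle := le_csSup (carath_bddAbove hΩ hw) hmem
  have heq : (r / t^2) / (1 - (r/t)^2) = r / (t^2 - r^2) := by
    have h4 : t^2 - r^2 ≠ 0 := by nlinarith
    field_simp
  have hfin : r / (s * (s + 2*r)) ≤ (r / t^2) / (1 - (r/t)^2) := by
    rw [heq]
    apply div_le_div_of_nonneg_left hr.le (by nlinarith) (by nlinarith)
  calc r / (s * (s + 2*r)) ≤ Complex.abs (deriv g w) := by rw [hx0]; exact hfin
  _ ≤ carath Ω w := hle

set_option maxHeartbeats 1000000 in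
/-- A smoothly bounded planar domain has infinite area in the Carathéodory metric:
`∫_Ω c_Ω(z)² dA(z) = +∞`. -/
theorem stmt19 (Ω : Set ℂ) (hΩ : IsSmoothlyBoundedDomain Ω) :
    ∫⁻ z in Ω, ENNReal.ofReal (carath Ω z ^ 2) = ⊤ := by
  have hopen : IsOpen Ω := hΩ.1
  obtain ⟨p, a, r, v₀, ε, δ, hr, hpa, hdisj, hε, hδ, hδ1, hannulus, hcone⟩ :=
    boundary_geometry hΩ
  set C : ℝ := r / (1 + 2*r) with hCdef
  have hC : 0 < C := by positivity
  set sk : ℕ → ℝ := fun k => δ * (1/2:ℝ)^k with hskdef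
  have hskpos : ∀ k, 0 < sk k := fun k => by positivity
  have hskδ : ∀ k, sk k ≤ δ := by
    intro k
    rw [hskdef]
    calc δ * (1/2:ℝ)^k ≤ δ * 1 := by
          apply mul_le_mul_of_nonneg_left _ hδ.le
          exact pow_le_one₀ (by norm_num) (by norm_num)
    _ = δ := mul_one δ
  have hsk1 : ∀ k, sk k ≤ 1 := fun k => le_trans (hskδ k) hδ1
  set E : ℕ → Set ℂ := fun k => Metric.ball (p + (sk k) • v₀) (ε * sk k) with hEdef
  -- membership facts
  have hEfact : ∀ k, ∀ z ∈ E k, z ∈ Ω ∧ sk k / 2 < Complex.abs (z - p) ∧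
      Complex.abs (z - p) ≤ sk k := by
    intro k z hz
    set s := sk k with hs
    have hspos : 0 < s := hskpos k
    set v : ℂ := s⁻¹ • (z - p) with hvdef
    have hsmulv : s • v = z - p := by
      rw [hvdef, smul_smul, mul_inv_cancel₀ hspos.ne', one_smul]
    have hzv : z = p + s • v := by rw [hsmulv]; ring
    have hsv : s • (v - v₀) = z - (p + s • v₀) := by
      rw [smul_sub, hsmulv]; ring
    have hvball : v ∈ Metric.ball v₀ ε := by
      have h2 : ‖z - (p + s • v₀)‖ < ε * s := by
        have h2' := Metric.mem_ball.mp hz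
        rwa [dist_eq_norm] at h2'
      have h4 : s * ‖v - v₀‖ < ε * s := by
        calc s * ‖v - v₀‖ = ‖s • (v - v₀)‖ := by
              rw [norm_smul, Real.norm_eq_abs, abs_of_pos hspos]
        _ = ‖z - (p + s • v₀)‖ := by rw [hsv]
        _ < ε * s := h2
      rw [Metric.mem_ball, dist_eq_norm]
      exact (mul_lt_mul_iff_right₀ hspos).mp (by linarith)
    obtain ⟨hv12, hv1⟩ := hannulus v hvball
    have habs : Complex.abs (z - p) = s * Complex.abs v := by
      rw [hzv]
      rw [show p + s • v - p = s • v by ring]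
      rw [show Complex.abs (s • v) = ‖s • v‖ from rfl, norm_smul, Real.norm_eq_abs,
        abs_of_pos hspos]
      rfl
    refine ⟨?_, ?_, ?_⟩
    · rw [hzv]; exact hcone s v hspos (hskδ k) hvball
    · rw [habs]
      calc s / 2 = s * (1/2) := by ring
      _ < s * Complex.abs v := by exact mul_lt_mul_of_pos_left hv12 hspos
    · rw [habs]
      calc s * Complex.abs v ≤ s * 1 := mul_le_mul_of_nonneg_left hv1.le hspos.le
      _ = s := mul_one s
  -- lower bound for carath on E k
  have hkey : ∀ k, ∀ z ∈ E k,
      ENNReal.ofReal ((C / sk k)^2) ≤ ENNReal.ofReal (carath Ω z ^ 2) := by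
    intro k z hz
    obtain ⟨hzΩ, _, hzp⟩ := hEfact k z hz
    have h3 := carath_ge hopen hr hpa hdisj hzΩ (hskpos k) hzp
    have h4 : C / sk k ≤ r / (sk k * (sk k + 2*r)) := by
      have hA : 0 < sk k * (sk k + 2*r) := by positivity
      have hB : sk k * (sk k + 2*r) ≤ sk k * (1 + 2*r) :=
        mul_le_mul_of_nonneg_left (by linarith [hsk1 k]) (hskpos k).le
      have hCeq : C / sk k = r / (sk k * (1+2*r)) := by
        rw [hCdef, div_div]
        ring_nf
      rw [hCeq]
      exact div_le_div_of_nonneg_left hr.le hA hB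
    have h5 : C / sk k ≤ carath Ω z := le_trans h4 h3
    apply ENNReal.ofReal_le_ofReal
    have h6 : 0 ≤ C / sk k := by positivity
    calc (C / sk k)^2 ≤ (carath Ω z)^2 := by nlinarith
    _ = carath Ω z ^ 2 := rfl
  -- disjointness
  have hdisjE : Pairwise (Function.onFun Disjoint E) := by
    have hmono : ∀ i j : ℕ, i < j → sk j ≤ sk i / 2 := by
      intro i j hij
      have hij' : i + 1 ≤ j := hij
      calc sk j = δ * (1/2:ℝ)^j := by rw [hskdef]
      _ ≤ δ * (1/2:ℝ)^(i+1) :=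
        mul_le_mul_of_nonneg_left
          (pow_le_pow_of_le_one (by norm_num) (by norm_num) hij') hδ.le
      _ = sk i / 2 := by rw [hskdef]; simp only; rw [pow_succ]; ring
    have hside : ∀ i j : ℕ, i < j → Disjoint (E i) (E j) := by
      intro i j hij
      rw [Set.disjoint_left]
      intro z hzi hzj
      obtain ⟨_, h1, _⟩ := hEfact i z hzi
      obtain ⟨_, _, h2⟩ := hEfact j z hzj
      have := hmono i j hij
      linarith
    intro i j hij
    rcases lt_or_gt_of_ne hij with h | h
    · exact hside i j h
    · exact (hside j i h).symm
  -- volume computation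
  have hvol : ∀ k, volume (E k) = ENNReal.ofReal (ε * sk k) ^ 2 * NNReal.pi := by
    intro k
    rw [hEdef]
    exact Complex.volume_ball _ _
  set c₀ : ℝ≥0∞ := ENNReal.ofReal (C^2 * ε^2) * NNReal.pi with hc₀def
  have hc₀ : c₀ ≠ 0 := by
    apply mul_ne_zero
    · exact (ENNReal.ofReal_pos.mpr (by positivity)).ne'
    · exact_mod_cast NNReal.pi_ne_zero
  have hterm : ∀ k, c₀ ≤ ∫⁻ z in E k, ENNReal.ofReal (carath Ω z ^ 2) := by
    intro k
    have h7 : ∫⁻ _ in E k, ENNReal.ofReal ((C / sk k)^2) = ENNReal.ofReal ((C / sk k)^2) * volume (E k) :=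
      setLIntegral_const _ _
    have h8 : ∫⁻ z in E k, ENNReal.ofReal ((C / sk k)^2) ≤
        ∫⁻ z in E k, ENNReal.ofReal (carath Ω z ^ 2) := by
      apply lintegral_mono_ae
      rw [ae_restrict_iff' measurableSet_ball]
      exact ae_of_all _ (fun z hz => hkey k z hz)
    have h9 : c₀ = ENNReal.ofReal ((C / sk k)^2) * volume (E k) := by
      rw [hvol k, hc₀def]
      rw [← ENNReal.ofReal_pow (by positivity), ← mul_assoc, ← ENNReal.ofReal_mul (by positivity)]
      congr 2
      have hs := (hskpos k).ne'
      field_simp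
    rw [h9, ← h7]
    exact h8
  -- put it together
  have hsub : (⋃ k, E k) ⊆ Ω := by
    intro z hz
    obtain ⟨k, hk⟩ := Set.mem_iUnion.mp hz
    exact (hEfact k z hk).1
  have htop : (⊤ : ℝ≥0∞) ≤ ∫⁻ z in Ω, ENNReal.ofReal (carath Ω z ^ 2) := by
    calc (⊤ : ℝ≥0∞) = ∑' _ : ℕ, c₀ := (ENNReal.tsum_const_eq_top_of_ne_zero hc₀).symm
    _ ≤ ∑' k, ∫⁻ z in E k, ENNReal.ofReal (carath Ω z ^ 2) := ENNReal.tsum_le_tsum hterm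
    _ = ∫⁻ z in ⋃ k, E k, ENNReal.ofReal (carath Ω z ^ 2) :=
        (lintegral_iUnion (fun k => measurableSet_ball) hdisjE _).symm
    _ ≤ _ := lintegral_mono_set hsub
  exact top_le_iff.mp htop
end
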